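/- arXiv:2207.14127 — 6 statements merged into one kernel-verified Lean document; each statement's English description precedes it below -/
import Mathlib

section
/- Let X be a CAT(0) space, α = [x₁, x₃] a geodesic, x ∉ α, and x₂ ∈ α. If h is a curtain dual to the geodesic [x₂, x] that meets [x₁, x₂], then h does not meet [x₂, x₃]. -/
open Metric Set


lemma midpoint_max_principle {φ : ℝ → ℝ} {A B : ℝ} (hlt : A < B)
    (hφc : ContinuousOn φ (Icc A B))
    (hφmid : ∀ x ∈ Icc A B, ∀ y ∈ Icc A B, φ ((x + y) / 2) ≤ (φ x + φ y) / 2)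
    (hφA : φ A = 0) (hφB : φ B = 0) :
    ∀ w ∈ Icc A B, φ w ≤ 0 := by
  by_contra hcon
  push_neg at hcon
  obtain ⟨w₀, hw₀, hw₀pos⟩ := hcon
  obtain ⟨t₀, ht₀, hmax⟩ := isCompact_Icc.exists_isMaxOn (nonempty_Icc.mpr hlt.le) hφc
  have ht₀pos : 0 < φ t₀ := lt_of_lt_of_le hw₀pos (hmax hw₀)
  have hKsub : Icc A B ∩ φ ⁻¹' (Ici (φ t₀)) ⊆ Icc A B := inter_subset_left
  have hKne : (Icc A B ∩ φ ⁻¹' (Ici (φ t₀))).Nonempty := ⟨t₀, ht₀, by simp [mem_preimage]⟩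
  have hKclosed : IsClosed (Icc A B ∩ φ ⁻¹' (Ici (φ t₀))) :=
    ContinuousOn.preimage_isClosed_of_isClosed hφc isClosed_Icc isClosed_Ici
  have hKc : IsCompact (Icc A B ∩ φ ⁻¹' (Ici (φ t₀))) :=
    isCompact_Icc.of_isClosed_subset hKclosed hKsub
  have hmem := hKc.sSup_mem hKne
  obtain ⟨hmIcc, hmge⟩ := hmem
  rw [mem_preimage, mem_Ici] at hmge
  have hφm : φ (sSup (Icc A B ∩ φ ⁻¹' (Ici (φ t₀)))) = φ t₀ := le_antisymm (hmax hmIcc) hmge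
  generalize hm : sSup (Icc A B ∩ φ ⁻¹' (Ici (φ t₀))) = m at *
  have hφmpos : 0 < φ m := by rw [hφm]; exact ht₀pos
  have hmA : A < m := by
    rcases lt_or_eq_of_le hmIcc.1 with h' | h'
    · exact h'
    · exfalso; rw [← h', hφA] at hφmpos; exact lt_irrefl _ hφmpos
  have hmB : m < B := by
    rcases lt_or_eq_of_le hmIcc.2 with h' | h'
    · exact h'
    · exfalso; rw [h', hφB] at hφmpos; exact lt_irrefl _ hφmpos
  have hεpos : 0 < min (m - A) (B - m) := lt_min (by linarith) (by linarith)
  have h1 : m - min (m - A) (B - m) ∈ Icc A B :=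
    ⟨by have := min_le_left (m - A) (B - m); linarith, by linarith⟩
  have h2 : m + min (m - A) (B - m) ∈ Icc A B :=
    ⟨by linarith [hmIcc.1], by have := min_le_right (m - A) (B - m); linarith⟩
  have hmid' := hφmid _ h1 _ h2
  have heq : ((m - min (m - A) (B - m)) + (m + min (m - A) (B - m))) / 2 = m := by ring
  rw [heq] at hmid'
  have hle1 : φ (m - min (m - A) (B - m)) ≤ φ m := by rw [hφm]; exact hmax h1
  have hle2 : φ m ≤ φ (m + min (m - A) (B - m)) := by linarith
  have hmemK : m + min (m - A) (B - m) ∈ Icc A B ∩ φ ⁻¹' (Ici (φ t₀)) :=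
    ⟨h2, by rw [mem_preimage, mem_Ici, ← hφm]; exact hle2⟩
  have := le_csSup hKc.bddAbove hmemK
  rw [hm] at this
  linarith

lemma midpoint_convex_bound {f : ℝ → ℝ} {A B : ℝ} (hAB : A ≤ B)
    (hf : ContinuousOn f (Icc A B))
    (hmid : ∀ x ∈ Icc A B, ∀ y ∈ Icc A B, f ((x + y) / 2) ≤ (f x + f y) / 2) :
    ∀ w ∈ Icc A B, (B - A) * f w ≤ (B - w) * f A + (w - A) * f B := by
  rcases eq_or_lt_of_le hAB with rfl | hlt
  · intro w hw
    have hwA : w = A := le_antisymm hw.2 hw.1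
    subst hwA; simp
  have key := midpoint_max_principle (φ := fun t =>
      (B - A) * f t - ((B - t) * f A + (t - A) * f B)) hlt
    (by
      apply ContinuousOn.sub
      · exact continuousOn_const.mul hf
      · exact (((continuousOn_const.sub continuousOn_id).mul continuousOn_const).add
          ((continuousOn_id.sub continuousOn_const).mul continuousOn_const)))
    (by
      intro x hx y hy
      have h1 := hmid x hx y hy
      have h2 : (0:ℝ) ≤ B - A := by linarith
      have h3 := mul_le_mul_of_nonneg_left h1 h2
      nlinarith [h3])
    (by ring) (by ring)
  intro w hw
  have := key w hw
  linarith


namespace Curtains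

/-- A CAT(0) space: a metric space in which midpoints exist and the
Bruhat–Tits CN comparison inequality holds. -/
class CAT0 (X : Type*) [MetricSpace X] : Prop where
  midpoint : ∀ x y : X, ∃ m : X, dist x m = dist x y / 2 ∧ dist y m = dist x y / 2
  cn : ∀ x y z m : X, dist x m = dist x y / 2 → dist y m = dist x y / 2 →
    dist z m ^ 2 ≤ (dist z x ^ 2 + dist z y ^ 2) / 2 - dist x y ^ 2 / 4

variable {X : Type*} [MetricSpace X]

/-- `γ` is a unit-speed geodesic on the set `I ⊆ ℝ`. -/
def IsGeodesicOn (γ : ℝ → X) (I : Set ℝ) : Prop :=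
  ∀ s ∈ I, ∀ t ∈ I, dist (γ s) (γ t) = |s - t|

/-- `γ` parametrises the geodesic segment `[x,y]` by `[0, dist x y]`. -/
def IsGeoSeg (γ : ℝ → X) (x y : X) : Prop :=
  γ 0 = x ∧ γ (dist x y) = y ∧ IsGeodesicOn γ (Icc 0 (dist x y))

/-- The geodesic segment `[x,y]` as a subset of `X`. -/
def seg (γ : ℝ → X) (x y : X) : Set X := γ '' Icc 0 (dist x y)

/-- A geodesic defined on an interval `I ⊆ ℝ`, together with a choice of
closest-point projection onto it. -/
structure Geodesic (X : Type*) [MetricSpace X] where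
  I : Set ℝ
  ordConn : I.OrdConnected
  map : ℝ → X
  isom : IsGeodesicOn map I
  proj : X → ℝ
  proj_mem : ∀ x : X, proj x ∈ I
  proj_min : ∀ x : X, ∀ t ∈ I, dist x (map (proj x)) ≤ dist x (map t)

/-- A curtain: the preimage under the closest-point projection of a length-one
subsegment (the pole) not containing the endpoints of the geodesic. -/
structure Curtain (X : Type*) [MetricSpace X] where
  geo : Geodesic X
  r : ℝ
  pole_in_interior : Icc (r - 1/2) (r + 1/2) ⊆ interior geo.I

namespace Curtain

variable (h : Curtain X)

/-- The curtain as a subset of `X`. -/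
def carrier : Set X := {x | h.geo.proj x ∈ Icc (h.r - 1/2) (h.r + 1/2)}

/-- The negative halfspace `h⁻`. -/
def minus : Set X := {x | h.geo.proj x < h.r - 1/2}

/-- The positive halfspace `h⁺`. -/
def plus : Set X := {x | h.r + 1/2 < h.geo.proj x}

/-- The pole of the curtain. -/
def pole : Set X := h.geo.map '' Icc (h.r - 1/2) (h.r + 1/2)

/-- `h` is dual to the geodesic segment from `x` to `y` parametrised by `γ`. -/
def DualToSeg (γ : ℝ → X) (x y : X) : Prop :=
  h.geo.I = Icc 0 (dist x y) ∧ ∀ t ∈ Icc (0:ℝ) (dist x y), h.geo.map t = γ t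

/-- `h` separates the set `A` from the set `B`. -/
def SeparatesSets (A B : Set X) : Prop :=
  (A ⊆ h.minus ∧ B ⊆ h.plus) ∨ (A ⊆ h.plus ∧ B ⊆ h.minus)

/-- `h` separates the point `x` from the point `y`. -/
def SeparatesPts (x y : X) : Prop := h.SeparatesSets {x} {y}

end Curtain

/-- Two curtains meet if their carriers intersect. -/
def Meets (h k : Curtain X) : Prop := (h.carrier ∩ k.carrier).Nonempty

/-- A (finite) chain of curtains: pairwise disjoint, and each member separates
its neighbours. -/
def IsChainSeq {n : ℕ} (c : Fin n → Curtain X) : Prop :=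
  (∀ i j, i ≠ j → Disjoint (c i).carrier (c j).carrier) ∧
  (∀ i j k : Fin n, (i : ℕ) + 1 = j → (j : ℕ) + 1 = k →
    (c j).SeparatesSets (c i).carrier (c k).carrier)

/-- An infinite chain of curtains indexed by `ℕ`. -/
def IsChainSeqNat (c : ℕ → Curtain X) : Prop :=
  (∀ i j, i ≠ j → Disjoint (c i).carrier (c j).carrier) ∧
  (∀ i, (c (i+1)).SeparatesSets (c i).carrier (c (i+2)).carrier)

/-- Two disjoint curtains are `L`-separated if every chain of curtains meeting
both has cardinality at most `L`. -/
def LSeparated (L : ℕ∞) (h h' : Curtain X) : Prop :=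
  Disjoint h.carrier h'.carrier ∧
  ∀ (n : ℕ) (c : Fin n → Curtain X), IsChainSeq c →
    (∀ i, Meets (c i) h ∧ Meets (c i) h') → (n : ℕ∞) ≤ L

/-- Real-valued variant of `L`-separation. -/
def LSeparatedR (L : ℝ) (h h' : Curtain X) : Prop :=
  Disjoint h.carrier h'.carrier ∧
  ∀ (n : ℕ) (c : Fin n → Curtain X), IsChainSeq c →
    (∀ i, Meets (c i) h ∧ Meets (c i) h') → (n : ℝ) ≤ L

/-- An `L`-chain: a chain whose members are pairwise `L`-separated. -/
def IsLChain (L : ℕ∞) {n : ℕ} (c : Fin n → Curtain X) : Prop :=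
  IsChainSeq c ∧ ∀ i j, i ≠ j → LSeparated L (c i) (c j)

/-- An infinite `L`-chain indexed by `ℕ`. -/
def IsLChainNat (L : ℕ∞) (c : ℕ → Curtain X) : Prop :=
  IsChainSeqNat c ∧ ∀ i j, i ≠ j → LSeparated L (c i) (c j)

/-- A chain separates `x` from `y` if every member does. -/
def SeparatesChain {n : ℕ} (c : Fin n → Curtain X) (x y : X) : Prop :=
  ∀ i, (c i).SeparatesPts x y

/-- The maximal cardinality of an `L`-chain separating `x` from `y`. -/
noncomputable def chainNum (L : ℕ∞) (x y : X) : ℕ :=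
  sSup {m : ℕ | ∃ c : Fin m → Curtain X, IsLChain L c ∧ SeparatesChain c x y}

open Classical in
/-- The curtain metric `d_L`. -/
noncomputable def dL (L : ℕ∞) (x y : X) : ℝ :=
  if x = y then 0 else 1 + (chainNum L x y : ℝ)

/-- A geodesic is `D`-contracting if every ball disjoint from it projects to a
set of diameter at most `D`. -/
def Geodesic.Contracting (g : Geodesic X) (D : ℝ) : Prop :=
  ∀ (x : X) (ρ : ℝ), Disjoint (closedBall x ρ) (g.map '' g.I) →
    Metric.diam (g.map '' (g.proj '' closedBall x ρ)) ≤ D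


lemma geod_cn {X : Type*} [MetricSpace X] [CAT0 X] {δ : ℝ → X} {L : ℝ} (hδ : IsGeodesicOn δ (Icc 0 L)) (z : X)
    {t₁ t₂ : ℝ} (h1 : t₁ ∈ Icc 0 L) (h2 : t₂ ∈ Icc 0 L) (h12 : t₁ ≤ t₂) :
    ∀ w ∈ Icc t₁ t₂, (t₂ - t₁) * (dist z (δ w) ^ 2 - w ^ 2) ≤
      (t₂ - w) * (dist z (δ t₁) ^ 2 - t₁ ^ 2) + (w - t₁) * (dist z (δ t₂) ^ 2 - t₂ ^ 2) := by
  have hsub : Icc t₁ t₂ ⊆ Icc 0 L := Icc_subset_Icc h1.1 h2.2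
  have hdistcont : ContinuousOn (fun t => dist z (δ t)) (Icc t₁ t₂) := by
    have hlip : LipschitzOnWith 1 (fun t => dist z (δ t)) (Icc t₁ t₂) := by
      apply LipschitzOnWith.of_dist_le_mul
      intro a ha b hb
      have hab := hδ a (hsub ha) b (hsub hb)
      calc dist (dist z (δ a)) (dist z (δ b))
          = |dist (δ a) z - dist (δ b) z| := by
            rw [Real.dist_eq, dist_comm z (δ a), dist_comm z (δ b)]
        _ ≤ dist (δ a) (δ b) := abs_dist_sub_le _ _ _
        _ = |a - b| := hab
        _ = 1 * dist a b := by rw [Real.dist_eq, one_mul]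
    exact hlip.continuousOn
  have hf : ContinuousOn (fun t => dist z (δ t) ^ 2 - t ^ 2) (Icc t₁ t₂) :=
    (hdistcont.pow 2).sub (continuousOn_id.pow 2)
  have hmid : ∀ a ∈ Icc t₁ t₂, ∀ b ∈ Icc t₁ t₂,
      (fun t => dist z (δ t) ^ 2 - t ^ 2) ((a + b) / 2) ≤
        ((fun t => dist z (δ t) ^ 2 - t ^ 2) a + (fun t => dist z (δ t) ^ 2 - t ^ 2) b) / 2 := by
    intro a ha b hb
    simp only
    have hmIcc : (a + b) / 2 ∈ Icc 0 L := by
      constructor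
      · have := (hsub ha).1; have := (hsub hb).1; linarith
      · have := (hsub ha).2; have := (hsub hb).2; linarith
    have hab : dist (δ a) (δ b) = |a - b| := hδ a (hsub ha) b (hsub hb)
    have ham : dist (δ a) (δ ((a + b) / 2)) = dist (δ a) (δ b) / 2 := by
      rw [hδ a (hsub ha) _ hmIcc, hab,
        show a - (a + b) / 2 = (a - b) / 2 by ring, abs_div, abs_two]
    have hbm : dist (δ b) (δ ((a + b) / 2)) = dist (δ a) (δ b) / 2 := by
      rw [hδ b (hsub hb) _ hmIcc, hab,
        show b - (a + b) / 2 = -((a - b) / 2) by ring, abs_neg, abs_div, abs_two]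
    have hcn := CAT0.cn (δ a) (δ b) z (δ ((a + b) / 2)) ham hbm
    rw [hab] at hcn
    have hsq : |a - b| ^ 2 = (a - b) ^ 2 := sq_abs _
    nlinarith [hcn]
  exact midpoint_convex_bound h12 hf hmid

/-- no bigons for related curtains. -/
theorem stmt3 {X : Type*} [MetricSpace X] [CAT0 X] (x₁ x₂ x₃ x : X)
    (γ : ℝ → X) (hγ : IsGeoSeg γ x₁ x₃)
    (s : ℝ) (hs : s ∈ Icc 0 (dist x₁ x₃)) (hx₂ : γ s = x₂)
    (hx : x ∉ seg γ x₁ x₃)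
    (β : ℝ → X) (hβ : IsGeoSeg β x₂ x)
    (h : Curtain X) (hdual : h.DualToSeg β x₂ x)
    (hmeet : (h.carrier ∩ γ '' Icc 0 s).Nonempty) :
    ¬ (h.carrier ∩ γ '' Icc s (dist x₁ x₃)).Nonempty := by
  rintro ⟨q, hqcar, u₀, hu₀, rfl⟩
  obtain ⟨p, hpcar, t₀, ht₀, rfl⟩ := hmeet
  obtain ⟨hI, hmapeq⟩ := hdual
  have hL0 : (0:ℝ) ≤ dist x₂ x := dist_nonneg
  have hmap0 : h.geo.map 0 = x₂ := by
    rw [hmapeq 0 ⟨le_refl 0, hL0⟩]; exact hβ.1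
  have hisom : IsGeodesicOn h.geo.map (Icc 0 (dist x₂ x)) := by
    rw [← hI]; exact h.geo.isom
  have hmem1 : h.r - 1/2 ∈ interior h.geo.I :=
    h.pole_in_interior ⟨le_refl _, by linarith⟩
  rw [hI, interior_Icc] at hmem1
  have hcpos : 0 < h.r - 1/2 := hmem1.1
  have hcL : h.r - 1/2 < dist x₂ x := hmem1.2
  have h0I : (0:ℝ) ∈ h.geo.I := by rw [hI]; exact ⟨le_refl 0, hL0⟩
  have hproj0 : h.geo.proj x₂ = 0 := by
    have hmin := h.geo.proj_min x₂ 0 h0I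
    rw [hmap0, dist_self] at hmin
    have h0 : dist x₂ (h.geo.map (h.geo.proj x₂)) = 0 := le_antisymm hmin dist_nonneg
    rw [dist_eq_zero] at h0
    have h1 := hisom (h.geo.proj x₂) (by rw [← hI]; exact h.geo.proj_mem x₂)
      0 ⟨le_refl 0, hL0⟩
    rw [hmap0, ← h0, dist_self] at h1
    have := abs_eq_zero.mp h1.symm
    linarith
  have key : ∀ w : X, w ∈ h.carrier →
      dist w (h.geo.map (h.r - 1/2)) ^ 2 ≤ dist w x₂ ^ 2 := by
    intro w hw
    obtain ⟨hwa1, hwa2⟩ := hw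
    have haI : h.geo.proj w ∈ Icc 0 (dist x₂ x) := by
      rw [← hI]; exact h.geo.proj_mem w
    have hconv := geod_cn hisom w (t₁ := 0) (t₂ := h.geo.proj w)
      ⟨le_refl 0, hL0⟩ haI (le_trans hcpos.le hwa1) (h.r - 1/2) ⟨hcpos.le, hwa1⟩
    rw [hmap0] at hconv
    have hminw := h.geo.proj_min w 0 h0I
    rw [hmap0] at hminw
    have hd1 : (0:ℝ) ≤ dist w (h.geo.map (h.geo.proj w)) := dist_nonneg
    have hd2 : (0:ℝ) ≤ dist w x₂ := dist_nonneg
    have hsq : dist w (h.geo.map (h.geo.proj w)) ^ 2 ≤ dist w x₂ ^ 2 := by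
      nlinarith [hminw]
    have ha0 : 0 < h.geo.proj w := lt_of_lt_of_le hcpos hwa1
    nlinarith [hconv, mul_le_mul_of_nonneg_left hsq hcpos.le, ha0,
      mul_nonneg (mul_nonneg hcpos.le ha0.le) (sub_nonneg.mpr hwa1)]
  have hγiso := hγ.2.2
  have ht₀D : t₀ ∈ Icc 0 (dist x₁ x₃) := ⟨ht₀.1, le_trans ht₀.2 hs.2⟩
  have hu₀D : u₀ ∈ Icc 0 (dist x₁ x₃) := ⟨le_trans hs.1 hu₀.1, hu₀.2⟩
  have hdp : dist (γ t₀) x₂ = s - t₀ := by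
    rw [← hx₂, hγiso t₀ ht₀D s hs, abs_of_nonpos (by linarith [ht₀.2])]; ring
  have hdq : dist (γ u₀) x₂ = u₀ - s := by
    rw [← hx₂, hγiso u₀ hu₀D s hs, abs_of_nonneg (by linarith [hu₀.1])]
  have ht₀s : t₀ < s := by
    rcases lt_or_eq_of_le ht₀.2 with h' | h'
    · exact h'
    · exfalso
      have hp1 := hpcar.1
      rw [h', hx₂, hproj0] at hp1
      linarith
  have hsu₀ : s < u₀ := by
    rcases lt_or_eq_of_le hu₀.1 with h' | h'
    · exact h'
    · exfalso
      have hq1 := hqcar.1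
      rw [← h', hx₂, hproj0] at hq1
      linarith
  have hdzx₂ : dist (h.geo.map (h.r - 1/2)) x₂ = h.r - 1/2 := by
    have h1 := hisom (h.r - 1/2) ⟨hcpos.le, hcL.le⟩ 0 ⟨le_refl 0, hL0⟩
    rw [hmap0] at h1
    rw [h1, sub_zero, abs_of_nonneg hcpos.le]
  have hmain := geod_cn hγiso (h.geo.map (h.r - 1/2)) ht₀D hu₀D
    (by linarith) s ⟨ht₀.2, hu₀.1⟩
  rw [hx₂] at hmain
  have hP := key _ hpcar
  have hQ := key _ hqcar
  rw [hdp] at hP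
  rw [hdq] at hQ
  rw [dist_comm (h.geo.map (h.r - 1/2)) (γ t₀)] at hmain
  rw [dist_comm (h.geo.map (h.r - 1/2)) (γ u₀)] at hmain
  rw [hdzx₂] at hmain
  have h1 := mul_le_mul_of_nonneg_left hP (show (0:ℝ) ≤ u₀ - s by linarith)
  have h2 := mul_le_mul_of_nonneg_left hQ (show (0:ℝ) ≤ s - t₀ by linarith)
  have h3 := mul_pos (show (0:ℝ) < u₀ - t₀ by linarith) (pow_pos hcpos 2)
  nlinarith [hmain, h1, h2, h3]

end Curtains
end

section
/- Let α be a geodesic in a CAT(0) space X and x ∈ X. For any y ∈ α, the closest-point projection of y onto the geodesic [x, π_α(x)] equals π_α(x). -/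
open Metric Set

namespace Curtains

variable {X : Type*} [MetricSpace X]

/-! A point `z` of `[x, π x]` has the same nearest point `p = π x` on the geodesic, by the
triangle inequality. The CN inequality makes `u ↦ d(z, α u)²` strongly convex, and strong convexity
at a minimum upgrades minimality to the Pythagorean inequality `d(z, p)² + d(p, y)² ≤ d(z, y)²`
for every `y` on the geodesic; hence `d(y, p) ≤ d(y, z)`, strictly unless `z = p`. -/

open Filter Topology

theorem _root_.Set.OrdConnected.add_div_two_mem {I : Set ℝ} (hI : I.OrdConnected) {a u : ℝ}
    (ha : a ∈ I) (hu : u ∈ I) : (a + u) / 2 ∈ I := by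
  have := (hI.convex (𝕜 := ℝ)) ha hu (by norm_num : (0 : ℝ) ≤ 1 / 2)
    (by norm_num : (0 : ℝ) ≤ 1 / 2) (by norm_num)
  convert this using 1
  simp only [smul_eq_mul]
  ring

/-- Comparing `F u` with `F` at the midpoint shows `F a + (1 - 2⁻ⁿ) (u - a)² ≤ F u` by induction
on `n`. -/
theorem _root_.IsMinOn.add_sq_le_of_midpoint_le {F : ℝ → ℝ} {I : Set ℝ} {a : ℝ}
    (hmin : IsMinOn F I a) (hI : I.OrdConnected) (ha : a ∈ I)
    (hmid : ∀ u ∈ I, F ((a + u) / 2) ≤ (F a + F u) / 2 - (u - a) ^ 2 / 4)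
    {u : ℝ} (hu : u ∈ I) : F a + (u - a) ^ 2 ≤ F u := by
  have dyadic : ∀ n : ℕ, ∀ u ∈ I, F a + (1 - (1 / 2 : ℝ) ^ n) * (u - a) ^ 2 ≤ F u := by
    intro n
    induction n with
    | zero =>
      intro u hu
      simpa using isMinOn_iff.1 hmin u hu
    | succ n ih =>
      intro u hu
      have hm := ih _ (hI.add_div_two_mem ha hu)
      have hsq : ((a + u) / 2 - a) ^ 2 = (u - a) ^ 2 / 4 := by ring
      rw [hsq] at hm
      have := hmid u hu
      rw [pow_succ]
      nlinarith
  have hlim : Tendsto (fun n : ℕ => F a + (1 - (1 / 2 : ℝ) ^ n) * (u - a) ^ 2) atTop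
      (𝓝 (F a + (1 - 0) * (u - a) ^ 2)) :=
    tendsto_const_nhds.add <| ((tendsto_pow_atTop_nhds_zero_of_lt_one (by norm_num)
      (by norm_num)).const_sub 1).mul tendsto_const_nhds
  simpa using le_of_tendsto hlim (Eventually.of_forall fun n => dyadic n u hu)

theorem IsGeoSeg.dist_add_dist_eq {γ : ℝ → X} {x y : X} (hγ : IsGeoSeg γ x y) {s : ℝ}
    (hs : s ∈ Icc 0 (dist x y)) : dist x (γ s) + dist (γ s) y = dist x y := by
  obtain ⟨hγx, hγy, hγgeo⟩ := hγ
  have hd : dist x y ∈ Icc 0 (dist x y) := ⟨dist_nonneg, le_rfl⟩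
  have h0 : (0 : ℝ) ∈ Icc 0 (dist x y) := ⟨le_rfl, dist_nonneg⟩
  conv_lhs => rw [← hγx, ← hγy, hγgeo 0 h0 s hs, hγgeo s hs _ hd]
  rw [abs_of_nonpos (by linarith [hs.1]), abs_of_nonpos (by linarith [hs.2])]
  ring

theorem isMinOn_dist_of_dist_add_dist_eq {γ : ℝ → X} {I : Set ℝ} {a : ℝ} {x z : X}
    (hmin : IsMinOn (fun u => dist x (γ u)) I a)
    (hz : dist x z + dist z (γ a) = dist x (γ a)) :
    IsMinOn (fun u => dist z (γ u)) I a :=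
  isMinOn_iff.2 fun u hu => by
    have := isMinOn_iff.1 hmin u hu
    have := dist_triangle x z (γ u)
    linarith

theorem CAT0.dist_sq_geodesic_midpoint_le [CAT0 X] {γ : ℝ → X} {I : Set ℝ}
    (hγ : IsGeodesicOn γ I) (hI : I.OrdConnected) {a u : ℝ} (ha : a ∈ I) (hu : u ∈ I) (z : X) :
    dist z (γ ((a + u) / 2)) ^ 2 ≤ (dist z (γ a) ^ 2 + dist z (γ u) ^ 2) / 2 - (u - a) ^ 2 / 4 := by
  have hm := hI.add_div_two_mem ha hu
  have hau : dist (γ a) (γ u) = |u - a| := by rw [hγ a ha u hu, abs_sub_comm]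
  have h1 : dist (γ a) (γ ((a + u) / 2)) = dist (γ a) (γ u) / 2 := by
    rw [hau, hγ a ha _ hm, show a - (a + u) / 2 = -((u - a) / 2) by ring, abs_neg, abs_div,
      abs_two]
  have h2 : dist (γ u) (γ ((a + u) / 2)) = dist (γ a) (γ u) / 2 := by
    rw [hau, hγ u hu _ hm, show u - (a + u) / 2 = (u - a) / 2 by ring, abs_div, abs_two]
  simpa only [hau, sq_abs] using CAT0.cn _ _ z _ h1 h2

/-- The nearest-point projection onto a geodesic subtends an angle of at least `π / 2`. -/
theorem CAT0.dist_sq_add_sq_le_of_isMinOn [CAT0 X] {γ : ℝ → X} {I : Set ℝ}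
    (hγ : IsGeodesicOn γ I) (hI : I.OrdConnected) {a u : ℝ} (ha : a ∈ I) (hu : u ∈ I) {z : X}
    (hmin : IsMinOn (fun u => dist z (γ u)) I a) :
    dist z (γ a) ^ 2 + dist (γ a) (γ u) ^ 2 ≤ dist z (γ u) ^ 2 := by
  have hmin2 : IsMinOn (fun u => dist z (γ u) ^ 2) I a :=
    isMinOn_iff.2 fun v hv => pow_le_pow_left₀ dist_nonneg (isMinOn_iff.1 hmin v hv) 2
  rw [hγ a ha u hu, sq_abs, ← neg_sub, neg_sq]
  exact hmin2.add_sq_le_of_midpoint_le hI ha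
    (fun v hv => CAT0.dist_sq_geodesic_midpoint_le hγ hI ha hv z) hu

/-- for `y ∈ α`, the closest-point projection of `y` onto the
geodesic `[x, π_α x]` is `π_α x` (the unique closest point). -/
theorem stmt4 {X : Type*} [MetricSpace X] [CAT0 X] (g : Geodesic X)
    (x : X) (t : ℝ) (ht : t ∈ g.I)
    (γ : ℝ → X) (hγ : IsGeoSeg γ x (g.map (g.proj x))) :
    ∀ z ∈ seg γ x (g.map (g.proj x)),
      dist (g.map t) (g.map (g.proj x)) ≤ dist (g.map t) z ∧
      (z ≠ g.map (g.proj x) → dist (g.map t) (g.map (g.proj x)) < dist (g.map t) z) := by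
  rintro _ ⟨s, hs, rfl⟩
  have hmin : IsMinOn (fun u => dist (γ s) (g.map u)) g.I (g.proj x) :=
    isMinOn_dist_of_dist_add_dist_eq (isMinOn_iff.2 (g.proj_min x)) (hγ.dist_add_dist_eq hs)
  have hpyth := CAT0.dist_sq_add_sq_le_of_isMinOn g.isom g.ordConn (g.proj_mem x) ht hmin
  rw [dist_comm (γ s), dist_comm (γ s), dist_comm (g.map (g.proj x)) (g.map t)] at hpyth
  refine ⟨?_, fun hne => ?_⟩
  · refine (pow_le_pow_iff_left₀ dist_nonneg dist_nonneg two_ne_zero).1 ?_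
    linarith [sq_nonneg (dist (g.map (g.proj x)) (γ s))]
  · refine (pow_lt_pow_iff_left₀ dist_nonneg dist_nonneg two_ne_zero).1 ?_
    linarith [pow_pos (dist_pos.2 hne.symm) 2]

end Curtains
end

section
/- For any two points x, y in a CAT(0) space X, there is a chain c of curtains all dual to the geodesic [x,y] that separates x from y, with 1 + |c| = ⌈d(x,y)⌉, and this is the maximal cardinality of any chain separating x from y; that is, d_∞(x,y) = ⌈d(x,y)⌉. -/
open Metric Set

namespace Curtains

variable {X : Type*} [MetricSpace X]

/-- Roundness-2 / quadrilateral inequality, from two midpoints and three CN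
applications. -/
lemma roundness2 {X : Type*} [MetricSpace X] [CAT0 X] (x y z w : X) :
    dist x w ^ 2 + dist y z ^ 2 ≤
      dist x y ^ 2 + dist x z ^ 2 + dist w y ^ 2 + dist w z ^ 2 := by
  obtain ⟨n, hn1, hn2⟩ := CAT0.midpoint y z
  obtain ⟨m, hm1, hm2⟩ := CAT0.midpoint x w
  have h1 := CAT0.cn y z x n hn1 hn2
  have h2 := CAT0.cn y z w n hn1 hn2
  have h3 := CAT0.cn x w n m hm1 hm2
  have h4 : (0:ℝ) ≤ dist n m ^ 2 := sq_nonneg _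
  rw [dist_comm n x, dist_comm n w] at h3
  linarith [h1, h2, h3, h4]

/-- Pythagorean inequality for the closest-point projection onto a geodesic. -/
lemma geo_pythagoras {X : Type*} [MetricSpace X] [CAT0 X] (g : Geodesic X) (u : X)
    {s : ℝ} (hs : s ∈ g.I) :
    dist u (g.map (g.proj u)) ^ 2 + (s - g.proj u) ^ 2 ≤ dist u (g.map s) ^ 2 := by
  have key : ∀ k : ℕ, ∀ s ∈ g.I,
      dist u (g.map (g.proj u)) ^ 2 + (1 - (1/2 : ℝ)^k) * (s - g.proj u) ^ 2
        ≤ dist u (g.map s) ^ 2 := by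
    intro k
    induction k with
    | zero =>
      intro s hs
      have h1 := g.proj_min u s hs
      have h2 : (0:ℝ) ≤ dist u (g.map (g.proj u)) := dist_nonneg
      simp only [pow_zero]
      nlinarith
    | succ k ih =>
      intro s hs
      set a := g.proj u with ha_def
      have ha : a ∈ g.I := g.proj_mem u
      have ht : (a + s)/2 ∈ g.I := by
        apply g.ordConn.uIcc_subset ha hs
        rw [Set.mem_uIcc]
        rcases le_total a s with h | h
        · left; constructor <;> linarith
        · right; constructor <;> linarith
      have hd1 : dist (g.map a) (g.map ((a+s)/2)) = dist (g.map a) (g.map s) / 2 := by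
        rw [g.isom a ha _ ht, g.isom a ha s hs,
          show a - (a+s)/2 = (a - s)/2 by ring, abs_div]
        simp
      have hd2 : dist (g.map s) (g.map ((a+s)/2)) = dist (g.map a) (g.map s) / 2 := by
        rw [g.isom s hs _ ht, g.isom a ha s hs,
          show s - (a+s)/2 = -((a - s)/2) by ring, abs_neg, abs_div, abs_sub_comm a s]
        simp [abs_sub_comm s a]
      have hcn := CAT0.cn (g.map a) (g.map s) u (g.map ((a+s)/2)) hd1 hd2
      have hIH := ih ((a+s)/2) ht
      have hmid : ((a+s)/2 - a)^2 = (s - a)^2 / 4 := by ring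
      have hds : dist (g.map a) (g.map s) ^ 2 = (s - a)^2 := by
        rw [g.isom a ha s hs, sq_abs]; ring
      rw [hmid] at hIH
      have hp : ((1:ℝ)/2)^(k+1) = (1/2 : ℝ)^k / 2 := by rw [pow_succ]; ring
      rw [hp]
      nlinarith [hcn, hIH, hds]
  have hlim : Filter.Tendsto
      (fun k : ℕ => dist u (g.map (g.proj u)) ^ 2 + (1 - (1/2 : ℝ)^k) * (s - g.proj u) ^ 2)
      Filter.atTop
      (nhds (dist u (g.map (g.proj u)) ^ 2 + (1 - 0) * (s - g.proj u) ^ 2)) := by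
    refine Filter.Tendsto.const_add _ (Filter.Tendsto.mul_const _ (Filter.Tendsto.const_sub _ ?_))
    exact tendsto_pow_atTop_nhds_zero_of_lt_one (by norm_num) (by norm_num)
  have := le_of_tendsto hlim (Filter.Eventually.of_forall fun k => key k s hs)
  linarith [this]

/-- The closest-point projection onto a geodesic is `1`-Lipschitz. -/
lemma proj_abs_sub_le {X : Type*} [MetricSpace X] [CAT0 X] (g : Geodesic X) (u v : X) :
    |g.proj u - g.proj v| ≤ dist u v := by
  have ha : g.proj u ∈ g.I := g.proj_mem u
  have hb : g.proj v ∈ g.I := g.proj_mem v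
  have h1 := geo_pythagoras g u hb
  have h2 := geo_pythagoras g v ha
  have h3 := roundness2 u v (g.map (g.proj u)) (g.map (g.proj v))
  rw [dist_comm (g.map (g.proj v)) v] at h3
  have h4 : dist (g.map (g.proj v)) (g.map (g.proj u)) ^ 2 = (g.proj v - g.proj u)^2 := by
    rw [g.isom _ hb _ ha, sq_abs]
  rw [h4] at h3
  have h6 : (g.proj v - g.proj u)^2 = (g.proj u - g.proj v)^2 := by ring
  have h5 : (g.proj u - g.proj v)^2 ≤ dist u v ^ 2 := by linarith [h1, h2, h3, h6]
  rw [← Real.sqrt_sq (dist_nonneg (x := u) (y := v)), ← Real.sqrt_sq_eq_abs]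
  exact Real.sqrt_le_sqrt h5

/-- A continuous real function crossing the band `[lo, hi]` upwards has a clean
crossing interval. -/
lemma crossing_interval {f : ℝ → ℝ} {d lo hi : ℝ} (hd0 : 0 < d)
    (hcont : ContinuousOn f (Icc 0 d)) (h0 : f 0 < lo) (hlh : lo ≤ hi) (hdd : hi < f d) :
    ∃ a b : ℝ, 0 < a ∧ a ≤ b ∧ b < d ∧ f a = lo ∧ f b = hi ∧
      ∀ t ∈ Icc a b, lo ≤ f t ∧ f t ≤ hi := by
  have h0d : (0:ℝ) ≤ d := hd0.le
  set B := Icc 0 d ∩ f ⁻¹' {hi} with hB_def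
  have hBne : B.Nonempty := by
    obtain ⟨t, ht, hft⟩ := intermediate_value_Icc h0d hcont
      (show hi ∈ Icc (f 0) (f d) from ⟨by linarith, hdd.le⟩)
    exact ⟨t, ht, by simpa using hft⟩
  have hBclosed : IsClosed B := hcont.preimage_isClosed_of_isClosed isClosed_Icc
    isClosed_singleton
  have hBbdd : BddBelow B := ⟨0, fun t ht => ht.1.1⟩
  set b := sInf B with hb_def
  have hbB : b ∈ B := hBclosed.csInf_mem hBne hBbdd
  have hfb : f b = hi := hbB.2
  have hb0 : 0 ≤ b := hbB.1.1
  have hbd : b ≤ d := hbB.1.2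
  have hsub0b : Icc 0 b ⊆ Icc 0 d := Icc_subset_Icc le_rfl hbd
  set A := Icc 0 b ∩ f ⁻¹' {lo} with hA_def
  have hAne : A.Nonempty := by
    obtain ⟨t, ht, hft⟩ := intermediate_value_Icc hb0 (hcont.mono hsub0b)
      (show lo ∈ Icc (f 0) (f b) from ⟨h0.le, by rw [hfb]; exact hlh⟩)
    exact ⟨t, ht, by simpa using hft⟩
  have hAclosed : IsClosed A := (hcont.mono hsub0b).preimage_isClosed_of_isClosed
    isClosed_Icc isClosed_singleton
  have hAbdd : BddAbove A := ⟨b, fun t ht => ht.1.2⟩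
  set a := sSup A with ha_def
  have haA : a ∈ A := hAclosed.csSup_mem hAne hAbdd
  have hfa : f a = lo := haA.2
  have ha0 : 0 ≤ a := haA.1.1
  have hab : a ≤ b := haA.1.2
  have hapos : 0 < a := by
    rcases eq_or_lt_of_le ha0 with h | h
    · exfalso; rw [← h] at hfa; linarith
    · exact h
  have hbltd : b < d := by
    rcases eq_or_lt_of_le hbd with h | h
    · exfalso; rw [h] at hfb; linarith
    · exact h
  refine ⟨a, b, hapos, hab, hbltd, hfa, hfb, ?_⟩
  intro t ⟨hta, htb⟩
  have ht0 : 0 ≤ t := ha0.trans hta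
  have htd : t ≤ d := htb.trans hbd
  constructor
  · by_contra hlt
    push_neg at hlt
    obtain ⟨t', ht', hft'⟩ := intermediate_value_Icc htb
      (hcont.mono (Icc_subset_Icc ht0 hbd))
      (show lo ∈ Icc (f t) (f b) from ⟨hlt.le, by rw [hfb]; exact hlh⟩)
    have ht'A : t' ∈ A := ⟨⟨ht0.trans ht'.1, ht'.2⟩, by simpa using hft'⟩
    have : t' ≤ a := le_csSup hAbdd ht'A
    have hta' : t = a := le_antisymm (ht'.1.trans this) hta
    rw [hta', hfa] at hlt
    exact lt_irrefl _ hlt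
  · by_contra hgt
    push_neg at hgt
    obtain ⟨t', ht', hft'⟩ := intermediate_value_Icc hta
      (hcont.mono (Icc_subset_Icc ha0 htd))
      (show hi ∈ Icc (f a) (f t) from ⟨by rw [hfa]; exact hlh, hgt.le⟩)
    have ht'B : t' ∈ B := ⟨⟨ha0.trans ht'.1, (ht'.2.trans htb).trans hbd⟩, by simpa using hft'⟩
    have hbt' : b ≤ t' := csInf_le hBbdd ht'B
    have : t = b := le_antisymm htb (hbt'.trans ht'.2)
    rw [this, hfb] at hgt
    exact lt_irrefl _ hgt

/-- Any chain separating `x` from `y` has fewer than `dist x y` members. -/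
lemma sep_chain_lt_dist {X : Type*} [MetricSpace X] [CAT0 X] {x y : X} {γ : ℝ → X}
    (hγ0 : γ 0 = x) (hγd : γ (dist x y) = y)
    (hiso : IsGeodesicOn γ (Icc 0 (dist x y))) (hd0 : 0 < dist x y)
    (m : ℕ) (c' : Fin m → Curtain X) (hchain' : IsChainSeq c')
    (hsep' : SeparatesChain c' x y) : (m : ℝ) < dist x y := by
  set d := dist x y with hd_def
  rcases Nat.eq_zero_or_pos m with hm0 | hmpos
  · rw [hm0]; exact_mod_cast hd0
  have hcross : ∀ i : Fin m, ∃ a b : ℝ, 0 < a ∧ a ≤ b ∧ b < d ∧ 1 ≤ b - a ∧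
      ∀ t ∈ Icc a b, γ t ∈ (c' i).carrier := by
    intro i
    set f : ℝ → ℝ := fun t => (c' i).geo.proj (γ t) with hf_def
    have hfLip : ∀ s ∈ Icc 0 d, ∀ t ∈ Icc 0 d, |f s - f t| ≤ |s - t| := by
      intro s hs t ht
      calc |f s - f t| ≤ dist (γ s) (γ t) := proj_abs_sub_le (c' i).geo (γ s) (γ t)
      _ = |s - t| := hiso s hs t ht
    have hfcont : ContinuousOn f (Icc 0 d) := by
      apply LipschitzOnWith.continuousOn (K := 1)
      apply LipschitzOnWith.of_dist_le_mul
      intro s hs t ht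
      rw [Real.dist_eq, Real.dist_eq]
      simpa using hfLip s hs t ht
    have hcarmem : ∀ t : ℝ, (c' i).r - 1/2 ≤ f t ∧ f t ≤ (c' i).r + 1/2 →
        γ t ∈ (c' i).carrier := by
      intro t ht
      show f t ∈ Icc ((c' i).r - 1/2) ((c' i).r + 1/2)
      exact ⟨ht.1, ht.2⟩
    have hone : (c' i).r + 1/2 - ((c' i).r - 1/2) = 1 := by ring
    rcases hsep' i with ⟨hxm, hyp⟩ | ⟨hxp, hym⟩
    · have hx' : f 0 < (c' i).r - 1/2 := by
        have := hxm (Set.mem_singleton x)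
        show ((c' i).geo.proj (γ 0)) < _
        rw [hγ0]; exact this
      have hy' : (c' i).r + 1/2 < f d := by
        have := hyp (Set.mem_singleton y)
        show _ < ((c' i).geo.proj (γ d))
        rw [hγd]; exact this
      obtain ⟨a, b, hapos, hab, hbd, hfa, hfb, hint⟩ :=
        crossing_interval hd0 hfcont hx' (by linarith) hy'
      refine ⟨a, b, hapos, hab, hbd, ?_, ?_⟩
      · have h1 := hfLip b ⟨(hapos.le.trans hab), hbd.le⟩ a ⟨hapos.le, hab.trans hbd.le⟩
        rw [hfa, hfb] at h1
        rw [abs_of_nonneg (by linarith : (0:ℝ) ≤ b - a)] at h1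
        rw [abs_of_nonneg (by linarith : (0:ℝ) ≤ (c' i).r + 1/2 - ((c' i).r - 1/2))] at h1
        linarith
      · intro t ht
        exact hcarmem t (hint t ht)
    · have hx' : (c' i).r + 1/2 < f 0 := by
        have := hxp (Set.mem_singleton x)
        show _ < ((c' i).geo.proj (γ 0))
        rw [hγ0]; exact this
      have hy' : f d < (c' i).r - 1/2 := by
        have := hym (Set.mem_singleton y)
        show ((c' i).geo.proj (γ d)) < _
        rw [hγd]; exact this
      obtain ⟨a, b, hapos, hab, hbd, hfa, hfb, hint⟩ :=
        crossing_interval hd0 hfcont.neg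
          (show -(f 0) < -((c' i).r + 1/2) by linarith)
          (show -((c' i).r + 1/2) ≤ -((c' i).r - 1/2) by linarith)
          (show -((c' i).r - 1/2) < -(f d) by linarith)
      refine ⟨a, b, hapos, hab, hbd, ?_, ?_⟩
      · have h1 := hfLip b ⟨(hapos.le.trans hab), hbd.le⟩ a ⟨hapos.le, hab.trans hbd.le⟩
        have hfa' : f a = (c' i).r + 1/2 := by rw [Pi.neg_apply] at hfa; linarith [hfa]
        have hfb' : f b = (c' i).r - 1/2 := by rw [Pi.neg_apply] at hfb; linarith [hfb]
        rw [hfa', hfb'] at h1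
        rw [abs_of_nonpos (by linarith : (c' i).r - 1/2 - ((c' i).r + 1/2) ≤ (0:ℝ))] at h1
        rw [abs_of_nonneg (by linarith : (0:ℝ) ≤ b - a)] at h1
        linarith
      · intro t ht
        have := hint t ht; simp only [Pi.neg_apply] at this
        exact hcarmem t ⟨by linarith [this.2], by linarith [this.1]⟩
  choose a b hapos hab hbd hlen hmem using hcross
  have hdisj : Pairwise (Function.onFun Disjoint fun i : Fin m => Icc (a i) (b i)) := by
    intro i j hij
    have hcd := hchain'.1 i j hij
    simp only [Function.onFun]
    rw [Set.disjoint_left]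
    intro t hti htj
    exact (Set.disjoint_left.mp hcd (hmem i t hti)) (hmem j t htj)
  obtain ⟨i₀, _, hi₀min⟩ := Finset.exists_min_image Finset.univ a
    ⟨⟨0, hmpos⟩, Finset.mem_univ _⟩
  have hη0 : 0 < a i₀ := hapos i₀
  have hsubI : ∀ i, Icc (a i) (b i) ⊆ Icc (a i₀) d :=
    fun i => Icc_subset_Icc (hi₀min i (Finset.mem_univ i)) (hbd i).le
  have hmeasU : MeasureTheory.volume (⋃ i, Icc (a i) (b i))
      = ∑' i, MeasureTheory.volume (Icc (a i) (b i)) :=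
    MeasureTheory.measure_iUnion hdisj (fun i => measurableSet_Icc)
  have hle : (m : ENNReal) ≤ ENNReal.ofReal (d - a i₀) := by
    calc (m : ENNReal) = ∑ _i : Fin m, 1 := by simp
    _ ≤ ∑ i : Fin m, MeasureTheory.volume (Icc (a i) (b i)) := by
        apply Finset.sum_le_sum
        intro i _
        rw [Real.volume_Icc]
        exact ENNReal.one_le_ofReal.mpr (hlen i)
    _ = ∑' i, MeasureTheory.volume (Icc (a i) (b i)) := (tsum_fintype _).symm
    _ = MeasureTheory.volume (⋃ i, Icc (a i) (b i)) := hmeasU.symm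
    _ ≤ MeasureTheory.volume (Icc (a i₀) d) :=
        MeasureTheory.measure_mono (Set.iUnion_subset hsubI)
    _ = ENNReal.ofReal (d - a i₀) := Real.volume_Icc
  have hd_nonneg : 0 ≤ d - a i₀ := by linarith [hab i₀, (hbd i₀).le]
  have hfinal : (m : ℝ) ≤ d - a i₀ := by
    rw [← ENNReal.ofReal_natCast m] at hle
    exact (ENNReal.ofReal_le_ofReal_iff hd_nonneg).mp hle
  linarith

set_option maxHeartbeats 1000000 in
/-- a maximal chain separating `x` from `y` can be chosen dual to
`[x,y]`, it has cardinality `⌈d(x,y)⌉ - 1`, and `d_∞(x,y) = ⌈d(x,y)⌉`. -/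
theorem stmt5 {X : Type*} [MetricSpace X] [CAT0 X] (x y : X) (hxy : x ≠ y)
    (γ : ℝ → X) (hγ : IsGeoSeg γ x y) :
    (∃ (n : ℕ) (c : Fin n → Curtain X), IsChainSeq c ∧
      (∀ i, (c i).DualToSeg γ x y) ∧ SeparatesChain c x y ∧
      ((1 + n : ℝ) = (⌈dist x y⌉ : ℝ)) ∧
      (∀ (m : ℕ) (c' : Fin m → Curtain X), IsChainSeq c' → SeparatesChain c' x y →
        m ≤ n)) ∧
    dL ⊤ x y = (⌈dist x y⌉ : ℝ) := by
  obtain ⟨hγ0, hγd, hiso⟩ := hγ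
  set d := dist x y with hd_def
  have hd0 : 0 < d := dist_pos.mpr hxy
  -- the geodesic map is Lipschitz on [0, d]
  have hLip : LipschitzOnWith 1 γ (Icc 0 d) := by
    apply LipschitzOnWith.of_dist_le_mul
    intro s hs t ht
    rw [hiso s hs t ht, Real.dist_eq]
    simp
  have hγcont : ContinuousOn γ (Icc 0 d) := hLip.continuousOn
  -- closest point projection exists by compactness
  have hproj : ∀ z : X, ∃ t, t ∈ Icc 0 d ∧ ∀ s ∈ Icc 0 d, dist z (γ t) ≤ dist z (γ s) := by
    intro z
    have hcont2 : ContinuousOn (fun t => dist z (γ t)) (Icc 0 d) :=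
      (continuous_const.dist continuous_id).comp_continuousOn hγcont
    obtain ⟨t, htmem, hmin⟩ := isCompact_Icc.exists_isMinOn
      ⟨0, by constructor <;> simp [hd0.le]⟩ hcont2
    exact ⟨t, htmem, fun s hs => hmin hs⟩
  choose proj hprojmem hprojmin using hproj
  set G : Geodesic X :=
    { I := Icc 0 d
      ordConn := ordConnected_Icc
      map := γ
      isom := hiso
      proj := proj
      proj_mem := hprojmem
      proj_min := fun z t ht => hprojmin z t ht } with hG_def
  have hprojx : proj x = 0 := by
    have h1 : dist x (γ (proj x)) ≤ 0 := by
      have := hprojmin x 0 ⟨le_rfl, hd0.le⟩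
      rwa [hγ0, dist_self] at this
    have h2 : γ (proj x) = x := by
      have := le_antisymm h1 dist_nonneg
      exact (dist_eq_zero.mp this).symm
    have h3 := hiso (proj x) (hprojmem x) 0 ⟨le_rfl, hd0.le⟩
    rw [h2, hγ0, dist_self] at h3
    have := (abs_eq_zero.mp h3.symm)
    linarith
  have hprojy : proj y = d := by
    have h1 : dist y (γ (proj y)) ≤ 0 := by
      have := hprojmin y d ⟨hd0.le, le_rfl⟩
      rwa [hγd, dist_self] at this
    have h2 : γ (proj y) = y := by
      have := le_antisymm h1 dist_nonneg
      exact (dist_eq_zero.mp this).symm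
    have h3 := hiso (proj y) (hprojmem y) d ⟨hd0.le, le_rfl⟩
    rw [h2, hγd, dist_self] at h3
    have := (abs_eq_zero.mp h3.symm)
    linarith
  -- choice of n
  have hceil1 : 1 ≤ ⌈d⌉ := Int.ceil_pos.mpr hd0
  set n : ℕ := (⌈d⌉ - 1).toNat with hn_def
  have hn_int : (n : ℤ) = ⌈d⌉ - 1 := Int.toNat_of_nonneg (by omega)
  have hn_cast : (n : ℝ) = (⌈d⌉ : ℝ) - 1 := by
    have := congrArg (fun z : ℤ => (z : ℝ)) hn_int
    push_cast at this
    linarith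
  have hnd : (n : ℝ) < d := by
    have := Int.ceil_lt_add_one d
    rw [hn_cast]; linarith
  have hformula : (1 + n : ℝ) = ((⌈d⌉ : ℤ) : ℝ) := by rw [hn_cast]; ring
  set ε : ℝ := (d - n) / (n + 1) with hε_def
  have hε0 : 0 < ε := div_pos (by linarith) (by positivity)
  have hsum : (n : ℝ) * ε + n = d - ε := by
    have h1 : ε * ((n : ℝ) + 1) = d - n := by
      rw [hε_def]; field_simp
    linarith [h1]
  -- the curtains
  have hble : ∀ i : Fin n, ((i : ℕ) : ℝ) + 1 ≤ (n : ℝ) := by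
    intro i
    have : (i : ℕ) + 1 ≤ n := i.isLt
    exact_mod_cast this
  have hlo_pos : ∀ i : Fin n, 0 < ((i : ℕ) + 1 : ℝ) * ε + (i : ℕ) := by
    intro i; positivity
  have hhi_le : ∀ i : Fin n, ((i : ℕ) + 1 : ℝ) * ε + (i : ℕ) + 1 ≤ d - ε := by
    intro i
    have h1 := hble i
    have h2 : ((i : ℕ) + 1 : ℝ) * ε ≤ (n : ℝ) * ε :=
      mul_le_mul_of_nonneg_right h1 hε0.le
    linarith [hsum]
  set c : Fin n → Curtain X := fun i =>
    { geo := G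
      r := ((i : ℕ) + 1 : ℝ) * ε + (i : ℕ) + 1/2
      pole_in_interior := by
        intro t ht
        have hG : G.I = Icc 0 d := rfl
        rw [hG, interior_Icc]
        simp only [mem_Icc] at ht
        constructor
        · have := hlo_pos i; linarith [ht.1]
        · have := hhi_le i; linarith [ht.2, hε0] } with hc_def
  have hcr : ∀ i : Fin n, (c i).r = ((i : ℕ) + 1 : ℝ) * ε + (i : ℕ) + 1/2 := fun i => rfl
  have hcproj : ∀ i : Fin n, (c i).geo.proj = proj := fun i => rfl
  have hcar : ∀ (i : Fin n) (z : X), z ∈ (c i).carrier ↔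
      ((i : ℕ) + 1 : ℝ) * ε + (i : ℕ) ≤ proj z ∧
        proj z ≤ ((i : ℕ) + 1 : ℝ) * ε + (i : ℕ) + 1 := by
    intro i z
    show proj z ∈ Icc ((c i).r - 1/2) ((c i).r + 1/2) ↔ _
    rw [hcr, mem_Icc]
    constructor <;> intro h <;> constructor <;> linarith [h.1, h.2]
  have hminus : ∀ (i : Fin n) (z : X), z ∈ (c i).minus ↔
      proj z < ((i : ℕ) + 1 : ℝ) * ε + (i : ℕ) := by
    intro i z
    show proj z < (c i).r - 1/2 ↔ _
    rw [hcr]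
    constructor <;> intro h <;> linarith
  have hplus : ∀ (i : Fin n) (z : X), z ∈ (c i).plus ↔
      ((i : ℕ) + 1 : ℝ) * ε + (i : ℕ) + 1 < proj z := by
    intro i z
    show (c i).r + 1/2 < proj z ↔ _
    rw [hcr]
    constructor <;> intro h <;> linarith
  have hdisjkey : ∀ i j : Fin n, (i : ℕ) < (j : ℕ) →
      Disjoint (c i).carrier (c j).carrier := by
    intro i j hij
    rw [Set.disjoint_left]
    intro z hzi hzj
    have h1 := ((hcar i z).mp hzi).2
    have h2 := ((hcar j z).mp hzj).1
    have h3 : ((i : ℕ) : ℝ) + 1 ≤ ((j : ℕ) : ℝ) := by exact_mod_cast hij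
    nlinarith [hε0]
  have hchain : IsChainSeq c := by
    constructor
    · intro i j hij
      rcases Ne.lt_or_gt (fun h : (i : ℕ) = (j : ℕ) => hij (Fin.ext h)) with h | h
      · exact hdisjkey i j h
      · exact (hdisjkey j i h).symm
    · intro i j k hji hjk
      left
      constructor
      · intro z hz
        rw [hminus j z]
        have h1 := ((hcar i z).mp hz).2
        have h2 : ((j : ℕ) : ℝ) = ((i : ℕ) : ℝ) + 1 := by exact_mod_cast hji.symm
        nlinarith [hε0]
      · intro z hz
        rw [hplus j z]
        have h1 := ((hcar k z).mp hz).1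
        have h2 : ((k : ℕ) : ℝ) = ((j : ℕ) : ℝ) + 1 := by exact_mod_cast hjk.symm
        nlinarith [hε0]
  have hdual : ∀ i, (c i).DualToSeg γ x y := fun i => ⟨rfl, fun t _ => rfl⟩
  have hsepchain : SeparatesChain c x y := by
    intro i
    left
    constructor
    · rw [Set.singleton_subset_iff, hminus i x, hprojx]
      exact hlo_pos i
    · rw [Set.singleton_subset_iff, hplus i y, hprojy]
      linarith [hhi_le i, hε0]
  have hmax := sep_chain_lt_dist hγ0 hγd hiso hd0
  have hmaxn : ∀ (m : ℕ) (c' : Fin m → Curtain X), IsChainSeq c' →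
      SeparatesChain c' x y → m ≤ n := by
    intro m c' h1 h2
    have h3 : (m : ℤ) < ⌈d⌉ := Int.lt_ceil.mpr (by exact_mod_cast hmax m c' h1 h2)
    omega
  -- PART C
  have hC : dL ⊤ x y = ((⌈d⌉ : ℤ) : ℝ) := by
    have hnmem : n ∈ {m : ℕ | ∃ cc : Fin m → Curtain X,
        IsLChain ⊤ cc ∧ SeparatesChain cc x y} :=
      ⟨c, ⟨hchain, fun i j hij => ⟨hchain.1 i j hij, fun k ck hck hmk => le_top⟩⟩, hsepchain⟩
    have hub : ∀ m ∈ {m : ℕ | ∃ cc : Fin m → Curtain X,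
        IsLChain ⊤ cc ∧ SeparatesChain cc x y}, m ≤ n := by
      rintro m ⟨cc, hlc, hsc⟩
      exact hmaxn m cc hlc.1 hsc
    have hsup : chainNum (⊤ : ℕ∞) x y = n := by
      rw [chainNum]
      exact le_antisymm (csSup_le ⟨n, hnmem⟩ hub) (le_csSup ⟨n, hub⟩ hnmem)
    rw [dL, if_neg hxy, hsup, ← hformula]
  exact ⟨⟨n, c, hchain, hdual, hsepchain, hformula, hmaxn⟩, hC⟩

end Curtains
end

section
/- For every L ∈ ℕ ∪ {∞}, the function d_L defined on a CAT(0) space X by d_L(x,x) = 0 and d_L(x,y) = 1 + max{|c| : c an L-chain separating x from y} for x ≠ y is a metric on X. -/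
open Metric Set

namespace Curtains

variable {X : Type*} [MetricSpace X]

section Aux
variable {X : Type*} [MetricSpace X] [CAT0 X]

/-- Berg–Nikolaev quadrilateral (roundness 2) inequality in CAT(0). -/
lemma quad (a b c d : X) :
    dist a b ^ 2 + dist c d ^ 2 ≤
      dist a c ^ 2 + dist a d ^ 2 + dist b c ^ 2 + dist b d ^ 2 := by
  obtain ⟨m, hm1, hm2⟩ := CAT0.midpoint c d
  have h1 := CAT0.cn c d a m hm1 hm2
  have h2 := CAT0.cn c d b m hm1 hm2
  have h3 : dist a b ≤ dist a m + dist m b := dist_triangle a m b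
  have h4 : dist a b ^ 2 ≤ 2 * (dist a m ^ 2 + dist m b ^ 2) := by
    nlinarith [dist_nonneg (x := a) (y := b), dist_nonneg (x := a) (y := m),
      dist_nonneg (x := m) (y := b), sq_nonneg (dist a m - dist m b)]
  rw [dist_comm m b] at h4
  linarith

lemma Geodesic.mem_of_between (g : Geodesic X) {s u v : ℝ} (hs : s ∈ g.I) (hu : u ∈ g.I)
    (h1 : s ≤ v) (h2 : v ≤ u) : v ∈ g.I := g.ordConn.out hs hu ⟨h1, h2⟩

lemma Geodesic.midF (g : Geodesic X) (x : X) {s u : ℝ} (hs : s ∈ g.I) (hu : u ∈ g.I) :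
    dist x (g.map ((s+u)/2)) ^ 2 - ((s+u)/2)^2 ≤
      ((dist x (g.map s) ^ 2 - s^2) + (dist x (g.map u) ^ 2 - u^2)) / 2 := by
  have hm : (s+u)/2 ∈ g.I := by
    rcases le_total s u with h | h
    · exact g.mem_of_between hs hu (by linarith) (by linarith)
    · exact g.mem_of_between hu hs (by linarith) (by linarith)
  have hd1 : dist (g.map s) (g.map ((s+u)/2)) = dist (g.map s) (g.map u) / 2 := by
    rw [g.isom s hs u hu, g.isom s hs _ hm]
    have e1 : s - (s+u)/2 = (s-u)/2 := by ring
    rw [e1, abs_div]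
    norm_num
  have hd2 : dist (g.map u) (g.map ((s+u)/2)) = dist (g.map s) (g.map u) / 2 := by
    rw [g.isom u hu _ hm, g.isom s hs u hu]
    have e1 : u - (s+u)/2 = -((s-u)/2) := by ring
    rw [e1, abs_neg, abs_div]
    norm_num
  have hcn := CAT0.cn (g.map s) (g.map u) x (g.map ((s+u)/2)) hd1 hd2
  have hsu : dist (g.map s) (g.map u) ^ 2 = (s - u)^2 := by
    rw [g.isom s hs u hu, sq_abs]
  nlinarith [hcn]

/-- Pythagorean inequality for the closest-point projection. -/
lemma Geodesic.pythagoras (g : Geodesic X) (x : X) {t : ℝ} (ht : t ∈ g.I) :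
    dist x (g.map (g.proj x)) ^ 2 + (t - g.proj x)^2 ≤ dist x (g.map t) ^ 2 := by
  set t0 := g.proj x with ht0def
  have ht0 : t0 ∈ g.I := g.proj_mem x
  set Δ := t - t0 with hDdef
  set F : ℝ → ℝ := fun s => dist x (g.map s) ^ 2 - s^2 with hF
  have hmem : ∀ n : ℕ, t0 + Δ * (1/2)^n ∈ g.I := by
    intro n
    have h1 : (0:ℝ) ≤ (1/2:ℝ)^n := by positivity
    have h2 : ((1:ℝ)/2)^n ≤ 1 := pow_le_one₀ (by norm_num) (by norm_num)
    rcases le_total t0 t with h | h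
    · exact g.mem_of_between ht0 ht (by nlinarith) (by nlinarith)
    · exact g.mem_of_between ht ht0 (by nlinarith) (by nlinarith)
  have hind : ∀ n : ℕ, F (t0 + Δ * (1/2)^n) ≤ (1 - (1/2)^n) * F t0 + (1/2)^n * F t := by
    intro n
    induction n with
    | zero =>
      have e : t0 + Δ * (1/2:ℝ)^0 = t := by rw [hDdef]; ring
      rw [e]; norm_num
    | succ n ih =>
      have hmid := g.midF x ht0 (hmem n)
      have harg : (t0 + (t0 + Δ * (1/2)^n)) / 2 = t0 + Δ * (1/2)^(n+1) := by ring
      rw [harg] at hmid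
      calc F (t0 + Δ * (1/2)^(n+1)) ≤ (F t0 + F (t0 + Δ * (1/2)^n)) / 2 := hmid
        _ ≤ (F t0 + ((1 - (1/2)^n) * F t0 + (1/2)^n * F t)) / 2 := by linarith
        _ = (1 - (1/2)^(n+1)) * F t0 + (1/2)^(n+1) * F t := by ring
  have hmin : ∀ n : ℕ, dist x (g.map t0) ≤ dist x (g.map (t0 + Δ * (1/2)^n)) :=
    fun n => g.proj_min x _ (hmem n)
  have hkey : ∀ n : ℕ, F t0 - F t - 2 * t0 * Δ ≤ (1/2)^n * Δ^2 := by
    intro n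
    have h1 := hind n
    have h2 : dist x (g.map t0) ^ 2 ≤ dist x (g.map (t0 + Δ * (1/2)^n)) ^ 2 := by
      have := hmin n
      nlinarith [dist_nonneg (x := x) (y := g.map t0)]
    have hlam : (0:ℝ) < (1/2)^n := by positivity
    have hFt0 : F t0 = dist x (g.map t0) ^2 - t0^2 := rfl
    have hFtn : F (t0 + Δ * (1/2)^n) = dist x (g.map (t0 + Δ * (1/2)^n)) ^2 - (t0 + Δ * (1/2)^n)^2 := rfl
    have h5 : (1/2:ℝ)^n * (F t0 - F t - 2*t0*Δ) ≤ (1/2:ℝ)^n * ((1/2)^n * Δ^2) := by nlinarith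
    exact le_of_mul_le_mul_left h5 hlam
  have hlim : F t0 - F t - 2 * t0 * Δ ≤ 0 := by
    by_contra hpos
    push_neg at hpos
    rcases eq_or_lt_of_le (sq_nonneg Δ) with hD0 | hD0
    · have := hkey 0; rw [← hD0] at this; simp at this; linarith
    · obtain ⟨n, hn⟩ := exists_pow_lt_of_lt_one (div_pos hpos hD0) (by norm_num : (1:ℝ)/2 < 1)
      have := hkey n
      rw [lt_div_iff₀ hD0] at hn
      nlinarith [hn]
  have hFt : F t = dist x (g.map t) ^2 - t^2 := rfl
  have hFt0' : F t0 = dist x (g.map t0) ^2 - t0^2 := rfl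
  have hid : t^2 = t0^2 + 2*t0*Δ + Δ^2 := by rw [hDdef]; ring
  rw [hFt, hFt0'] at hlim
  linarith
/-- The closest-point projection is 1-Lipschitz. -/
lemma Geodesic.proj_lip (g : Geodesic X) (x y : X) : |g.proj x - g.proj y| ≤ dist x y := by
  have hs : g.proj x ∈ g.I := g.proj_mem x
  have ht : g.proj y ∈ g.I := g.proj_mem y
  have h1 := g.pythagoras x ht
  have h2 := g.pythagoras y hs
  have hq := quad x (g.map (g.proj y)) y (g.map (g.proj x))
  have hpq : dist (g.map (g.proj y)) (g.map (g.proj x)) = |g.proj y - g.proj x| :=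
    g.isom _ ht _ hs
  have hyt : dist (g.map (g.proj y)) y = dist y (g.map (g.proj y)) := dist_comm _ _
  have habs : |g.proj y - g.proj x| ^ 2 = (g.proj y - g.proj x)^2 := sq_abs _
  rw [hyt, hpq, habs] at hq
  have e : (g.proj x - g.proj y)^2 = (g.proj y - g.proj x)^2 := by ring
  have h3 : (g.proj x - g.proj y)^2 ≤ dist x y ^ 2 := by linarith
  have h4 : |g.proj x - g.proj y| ^ 2 ≤ dist x y ^2 := by rw [sq_abs]; exact h3
  nlinarith [abs_nonneg (g.proj x - g.proj y), dist_nonneg (x := x) (y := y), h4]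

omit [CAT0 X] in
lemma Geodesic.proj_map_self (g : Geodesic X) {t : ℝ} (ht : t ∈ g.I) : g.proj (g.map t) = t := by
  have h1 : dist (g.map t) (g.map (g.proj (g.map t))) ≤ dist (g.map t) (g.map t) :=
    g.proj_min (g.map t) t ht
  rw [dist_self] at h1
  have h2 : dist (g.map t) (g.map (g.proj (g.map t))) = |t - g.proj (g.map t)| :=
    g.isom t ht _ (g.proj_mem _)
  have h3 : |t - g.proj (g.map t)| ≤ 0 := h2 ▸ h1
  have := abs_nonneg (t - g.proj (g.map t))
  have : |t - g.proj (g.map t)| = 0 := le_antisymm h3 this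
  rw [abs_eq_zero] at this
  linarith

omit [CAT0 X] in
lemma Curtain.carrier_nonempty (h : Curtain X) : (h.geo.map h.r) ∈ h.carrier := by
  have hr : h.r ∈ h.geo.I :=
    interior_subset (h.pole_in_interior ⟨by linarith, by linarith⟩)
  have := h.geo.proj_map_self hr
  simp only [Curtain.carrier, Set.mem_setOf_eq, this]
  constructor <;> linarith
noncomputable def midPt (x y : X) : X := (CAT0.midpoint x y).choose

lemma midPt_spec (x y : X) :
    dist x (midPt x y) = dist x y / 2 ∧ dist y (midPt x y) = dist x y / 2 :=
  (CAT0.midpoint x y).choose_spec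

lemma dyadic (x y : X) (n : ℕ) : ∃ p : ℕ → X, p 0 = x ∧ p (2^n) = y ∧
    (∀ i, i < 2^n → dist (p i) (p (i+1)) = dist x y / 2^n) ∧
    (∀ i, i ≤ 2^n → dist x (p i) = i * (dist x y / 2^n)) := by
  induction n with
  | zero =>
    refine ⟨fun i => if i = 0 then x else y, by simp, by simp, ?_, ?_⟩
    · intro i hi
      interval_cases i
      simp
    · intro i hi
      interval_cases i <;> simp
  | succ n ih =>
    obtain ⟨p, hp0, hpN, hcons, hdist⟩ := ih
    set δ : ℝ := dist x y / 2^n with hδdef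
    have hδ' : dist x y / 2^(n+1) = δ / 2 := by rw [hδdef]; ring
    refine ⟨fun i => if i % 2 = 0 then p (i/2) else midPt (p (i/2)) (p (i/2+1)), by simp [hp0],
      ?_, ?_, ?_⟩
    · have e : 2^(n+1) % 2 = 0 := by omega
      have e2 : 2^(n+1)/2 = 2^n := by omega
      simp [e, e2, hpN]
    · intro i hi
      rcases Nat.even_or_odd i with ⟨m, hm⟩ | ⟨m, hm⟩
      · subst hm
        have e1 : (m+m) % 2 = 0 := by omega
        have e2 : (m+m) / 2 = m := by omega
        have e3 : (m+m+1) % 2 = 1 := by omega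
        have e4 : (m+m+1) / 2 = m := by omega
        beta_reduce
        rw [if_pos e1, if_neg (by omega : ¬ ((m+m+1) % 2 = 0)), e2, e4,
          (midPt_spec (p m) (p (m+1))).1, hcons m (by omega), hδ']
      · subst hm
        have e1 : (2*m+1) % 2 = 1 := by omega
        have e2 : (2*m+1) / 2 = m := by omega
        have e3 : (2*m+1+1) % 2 = 0 := by omega
        have e4 : (2*m+1+1) / 2 = m+1 := by omega
        beta_reduce
        rw [if_neg (by omega : ¬ ((2*m+1) % 2 = 0)), if_pos e3, e2, e4, dist_comm,
          (midPt_spec (p m) (p (m+1))).2, hcons m (by omega), hδ']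
    · intro i hi
      rcases Nat.even_or_odd i with ⟨m, hm⟩ | ⟨m, hm⟩
      · subst hm
        have e1 : (m+m) % 2 = 0 := by omega
        have e2 : (m+m) / 2 = m := by omega
        beta_reduce
        rw [if_pos e1, e2, hdist m (by omega), hδ']
        push_cast
        ring
      · subst hm
        have e1 : (2*m+1) % 2 = 1 := by omega
        have e2 : (2*m+1) / 2 = m := by omega
        beta_reduce
        rw [if_neg (by omega : ¬ ((2*m+1) % 2 = 0)), e2]
        have hm1 : m + 1 ≤ 2^n := by omega
        have hub : dist x (midPt (p m) (p (m+1))) ≤ m * δ + δ/2 := by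
          calc dist x (midPt (p m) (p (m+1))) ≤ dist x (p m) + dist (p m) (midPt (p m) (p (m+1))) :=
              dist_triangle _ _ _
            _ = m * δ + δ/2 := by
              rw [hdist m (by omega), (midPt_spec (p m) (p (m+1))).1, hcons m (by omega)]
        have hlb : (m+1) * δ - δ/2 ≤ dist x (midPt (p m) (p (m+1))) := by
          have h1 : dist x (p (m+1)) ≤ dist x (midPt (p m) (p (m+1))) +
              dist (p (m+1)) (midPt (p m) (p (m+1))) := by
            rw [dist_comm (p (m+1))]
            exact dist_triangle _ _ _
          rw [hdist (m+1) hm1, (midPt_spec (p m) (p (m+1))).2, hcons m (by omega)] at h1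
          push_cast at h1 ⊢
          linarith
        rw [hδ']
        push_cast
        push_cast at hub hlb
        linarith

omit [CAT0 X] in
lemma path_pairwise {p : ℕ → X} {N : ℕ} {δ : ℝ} (hδ : 0 ≤ δ)
    (hc : ∀ i, i < N → dist (p i) (p (i+1)) = δ)
    (hx : ∀ i, i ≤ N → dist (p 0) (p i) = i * δ) :
    ∀ i j, i ≤ j → j ≤ N → dist (p i) (p j) = ((j : ℝ) - i) * δ := by
  intro i j hij hjN
  have hub : ∀ a b, a ≤ b → b ≤ N → dist (p a) (p b) ≤ ((b : ℝ) - a) * δ := by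
    intro a b hab hbN
    induction b with
    | zero => simp_all
    | succ b ihb =>
      rcases Nat.lt_or_ge a (b+1) with hlt | hge
      · have hab' : a ≤ b := by omega
        calc dist (p a) (p (b+1)) ≤ dist (p a) (p b) + dist (p b) (p (b+1)) := dist_triangle _ _ _
          _ ≤ ((b:ℝ) - a) * δ + δ := by
            have := ihb hab' (by omega)
            rw [hc b (by omega)]
            linarith
          _ = (((b+1 : ℕ) : ℝ) - a) * δ := by push_cast; ring
      · have : a = b + 1 := by omega
        subst this
        simp
  have h1 := hub i j hij hjN
  have h2 : ((j:ℝ)) * δ ≤ dist (p 0) (p i) + dist (p i) (p j) := by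
    rw [← hx j hjN]
    exact dist_triangle _ _ _
  rw [hx i (le_trans hij hjN)] at h2
  have hcast : ((j:ℝ) - i) ≥ 0 := by
    have : (i:ℝ) ≤ j := by exact_mod_cast hij
    linarith
  linarith

/-- A discretised geodesic path between two points with arbitrarily fine mesh. -/
lemma exists_path (x y : X) {δ : ℝ} (hδ : 0 < δ) :
    ∃ (N : ℕ) (p : ℕ → X) (ε : ℝ), 0 < N ∧ 0 ≤ ε ∧ ε ≤ δ ∧ (N : ℝ) * ε = dist x y ∧
      p 0 = x ∧ p N = y ∧
      ∀ i j, i ≤ j → j ≤ N → dist (p i) (p j) = ((j : ℝ) - i) * ε := by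
  obtain ⟨n, hn⟩ := pow_unbounded_of_one_lt (dist x y / δ) (by norm_num : (1:ℝ) < 2)
  obtain ⟨p, hp0, hpN, hcons, hdist⟩ := dyadic x y n
  have h2n : (0:ℝ) < 2^n := by positivity
  refine ⟨2^n, p, dist x y / 2^n, by positivity, by positivity, ?_, by field_simp; push_cast; ring, hp0, hpN, ?_⟩
  · rw [div_le_iff₀ h2n]
    rw [div_lt_iff₀ hδ] at hn
    nlinarith [hδ.le]
  · exact path_pairwise (by positivity) hcons (fun i hi => by rw [hp0]; exact hdist i hi)
namespace Curtain

omit [CAT0 X]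

/-- Oriented halfspace. -/
def side (h : Curtain X) (s : Bool) : Set X := if s then h.plus else h.minus

/-- Signed projection. -/
def sf (h : Curtain X) (s : Bool) (z : X) : ℝ := (if s then 1 else -1) * h.geo.proj z

/-- Signed pole centre. -/
def rs (h : Curtain X) (s : Bool) : ℝ := (if s then 1 else -1) * h.r

lemma mem_side {h : Curtain X} {s : Bool} {z : X} :
    z ∈ h.side s ↔ h.rs s + 1/2 < h.sf s z := by
  cases s <;> simp [side, sf, rs, plus, minus] <;> constructor <;> intro <;> linarith

lemma mem_side_not {h : Curtain X} {s : Bool} {z : X} :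
    z ∈ h.side (!s) ↔ h.sf s z < h.rs s - 1/2 := by
  cases s <;> simp [side, sf, rs, plus, minus] <;> constructor <;> intro <;> linarith

lemma mem_carrier_sf {h : Curtain X} (s : Bool) {z : X} :
    z ∈ h.carrier ↔ |h.sf s z - h.rs s| ≤ 1/2 := by
  cases s
  · have e1 : h.sf false z = -h.geo.proj z := by simp [Curtain.sf]
    have e2 : h.rs false = -h.r := by simp [Curtain.rs]
    rw [e1, e2]
    simp only [carrier, Set.mem_setOf_eq, Set.mem_Icc, abs_le]
    constructor <;> rintro ⟨h1, h2⟩ <;> constructor <;> linarith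
  · have e1 : h.sf true z = h.geo.proj z := by simp [Curtain.sf]
    have e2 : h.rs true = h.r := by simp [Curtain.rs]
    rw [e1, e2]
    simp only [carrier, Set.mem_setOf_eq, Set.mem_Icc, abs_le]
    constructor <;> rintro ⟨h1, h2⟩ <;> constructor <;> linarith

lemma not_mem_carrier_side {h : Curtain X} {z : X} (hz : z ∉ h.carrier) (s : Bool) :
    z ∈ h.side s ∨ z ∈ h.side (!s) := by
  rw [mem_side, mem_side_not]
  rw [mem_carrier_sf s, abs_le, not_and_or] at hz
  rcases hz with hz | hz <;> push_neg at hz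
  · right; linarith
  · left; linarith

lemma side_not_carrier {h : Curtain X} {z : X} {s : Bool} (hz : z ∈ h.side s) :
    z ∉ h.carrier := by
  rw [mem_side] at hz
  rw [mem_carrier_sf s, abs_le, not_and_or]
  right; push_neg; linarith

lemma sep_iff {h : Curtain X} {A B : Set X} :
    h.SeparatesSets A B ↔ ∃ s : Bool, A ⊆ h.side s ∧ B ⊆ h.side (!s) := by
  constructor
  · rintro (⟨h1, h2⟩ | ⟨h1, h2⟩)
    · exact ⟨false, h1, h2⟩
    · exact ⟨true, h1, h2⟩
  · rintro ⟨s, h1, h2⟩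
    cases s
    · exact Or.inl ⟨h1, h2⟩
    · exact Or.inr ⟨h1, h2⟩

end Curtain

lemma Curtain.sf_lip (h : Curtain X) (s : Bool) (u v : X) :
    |h.sf s u - h.sf s v| ≤ dist u v := by
  have hp := h.geo.proj_lip u v
  cases s
  · have e : h.sf false u - h.sf false v = -(h.geo.proj u - h.geo.proj v) := by
      simp [Curtain.sf]; ring
    rw [e, abs_neg]; exact hp
  · have e : h.sf true u - h.sf true v = h.geo.proj u - h.geo.proj v := by
      simp [Curtain.sf]
    rw [e]; exact hp

/-- Discrete continuity/contradiction core of the separation-transfer argument. -/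
lemma core {N : ℕ} {f g : ℕ → ℝ} {rA rB : ℝ}
    (hf : ∀ i, i < N → |f (i+1) - f i| ≤ 1/2) (hg : ∀ i, i < N → |g (i+1) - g i| ≤ 1/2)
    (h0f : rB + 1/2 < f 0) (h0g : g 0 < rA - 1/2) (hNg : rA - 1/2 ≤ g N)
    (hA : ∀ i, i ≤ N → |g i - rA| ≤ 1/2 → f i < rB - 1/2)
    (hB : ∀ i, i ≤ N → |f i - rB| ≤ 1/2 → rA + 1/2 < g i) : False := by
  classical
  have hP : ∃ i, i ≤ N ∧ (f i ≤ rB + 1/2 ∨ rA - 1/2 ≤ g i) :=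
    ⟨N, le_rfl, Or.inr hNg⟩
  set i := Nat.find hP with hidef
  obtain ⟨hiN, hi⟩ := Nat.find_spec hP
  have hi0 : i ≠ 0 := by
    intro h0
    rw [hidef] at h0
    have := Nat.find_spec hP
    rw [h0] at this
    rcases this.2 with h | h
    · linarith
    · linarith
  obtain ⟨m, hm⟩ : ∃ m, i = m + 1 := ⟨i - 1, by omega⟩
  have hmlt : m < i := by omega
  have hnP := Nat.find_min hP (hidef ▸ hmlt)
  beta_reduce at hnP
  push_neg at hnP
  have hmN : m ≤ N := by omega
  have hmltN : m < N := by omega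
  obtain ⟨hfm, hgm⟩ := hnP hmN
  have hfstep := abs_le.1 (hf m hmltN)
  have hgstep := abs_le.1 (hg m hmltN)
  rw [← hm] at hfstep hgstep
  rcases le_or_gt (rA - 1/2) (g i) with hgi | hgi
  · have h1 : |g i - rA| ≤ 1/2 := by
      rw [abs_le]
      constructor
      · linarith
      · have : g i ≤ g m + 1/2 := by linarith [hgstep.2]
        linarith
    have h2 := hA i hiN h1
    have : rB + 1/2 - 1/2 ≤ f i := by linarith [hfstep.1]
    linarith
  · have hfi : f i ≤ rB + 1/2 := by
      rcases hi with h | h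
      · exact h
      · linarith
    have h1 : |f i - rB| ≤ 1/2 := by
      rw [abs_le]
      constructor
      · linarith [hfstep.1]
      · linarith
    have h2 := hB i hiN h1
    linarith
/-- Transfer of separation across curtains. -/
lemma sep_transfer (A B : Curtain X) (sA sB : Bool) (x : X)
    (h1 : A.carrier ⊆ B.side sB) (h2 : B.carrier ⊆ A.side sA)
    (hx : x ∈ A.side (!sA)) (hxB : x ∉ B.carrier) : x ∈ B.side sB := by
  by_contra hc
  have hx' : x ∈ B.side (!sB) := by
    rcases Curtain.not_mem_carrier_side hxB sB with h | h
    · exact absurd h hc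
    · exact h
  set q := A.geo.map A.r with hqdef
  have hq : q ∈ A.carrier := A.carrier_nonempty
  obtain ⟨N, p, ε, hN, hε0, hεδ, hNε, hp0, hpN, hpair⟩ :=
    exists_path x q (δ := 1/2) (by norm_num)
  have hstep : ∀ u v : X, dist u v ≤ 1/2 → ∀ (C : Curtain X) (s : Bool),
      |C.sf s u - C.sf s v| ≤ 1/2 := fun u v huv C s => le_trans (C.sf_lip s u v) huv
  have hconsec : ∀ i, i < N → dist (p (i+1)) (p i) ≤ 1/2 := by
    intro i hi
    rw [dist_comm, hpair i (i+1) (by omega) (by omega)]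
    push_cast
    rw [show ((i:ℝ) + 1 - i) = 1 by ring, one_mul]
    exact hεδ
  apply core (N := N) (f := fun i => B.sf (!sB) (p i)) (g := fun i => A.sf sA (p i))
    (rA := A.rs sA) (rB := B.rs (!sB))
  · intro i hi
    exact hstep _ _ (hconsec i hi) B (!sB)
  · intro i hi
    exact hstep _ _ (hconsec i hi) A sA
  · rw [hp0]
    exact Curtain.mem_side.1 hx'
  · rw [hp0]
    exact Curtain.mem_side_not.1 hx
  · rw [hpN]
    have := (Curtain.mem_carrier_sf sA).1 hq
    rw [abs_le] at this
    linarith [this.1]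
  · intro i hiN hcar
    have hpi : p i ∈ A.carrier := (Curtain.mem_carrier_sf sA).2 hcar
    have := h1 hpi
    rw [show B.side sB = B.side (!(!sB)) by rw [Bool.not_not]] at this
    exact Curtain.mem_side_not.1 this
  · intro i hiN hcar
    have hpi : p i ∈ B.carrier := (Curtain.mem_carrier_sf (!sB)).2 hcar
    exact Curtain.mem_side.1 (h2 hpi)

section Chains

variable {n : ℕ} {c : Fin n → Curtain X}

/-- In a chain, each curtain separates any earlier one from its successor. -/
lemma chain_sep_left (hc : IsChainSeq c) :
    ∀ d : ℕ, ∀ i j k : Fin n, (i:ℕ) + (d + 1) = j → (j:ℕ) + 1 = k →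
      (c j).SeparatesSets (c i).carrier (c k).carrier := by
  intro d
  induction d with
  | zero => exact fun i j k hij hjk => hc.2 i j k (by omega) hjk
  | succ d ih =>
    intro i j k hij hjk
    have hj1 : 1 ≤ (j:ℕ) := by omega
    have hj' : (j:ℕ) - 1 < n := by omega
    set j' : Fin n := ⟨(j:ℕ) - 1, hj'⟩ with hj'def
    have e1 : (i:ℕ) + (d + 1) = (j':ℕ) := by simp [hj'def]; omega
    have e2 : (j':ℕ) + 1 = (j:ℕ) := by simp [hj'def]; omega
    have IH := ih i j' j e1 e2
    have AX := hc.2 j' j k e2 hjk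
    rw [Curtain.sep_iff] at IH AX ⊢
    obtain ⟨σ, hIH1, hIH2⟩ := IH
    obtain ⟨τ, hAX1, hAX2⟩ := AX
    refine ⟨τ, ?_, hAX2⟩
    intro x hxi
    have hij' : i ≠ j := by
      intro hh
      rw [hh] at hij
      omega
    refine sep_transfer (c j') (c j) (!σ) τ x hAX1 hIH2 ?_ ?_
    · rw [Bool.not_not]
      exact hIH1 hxi
    · intro hxj
      exact Set.disjoint_left.1 (hc.1 i j hij') hxi hxj

/-- In a chain, every middle curtain separates the earlier from the later ones. -/
lemma chain_sep (hc : IsChainSeq c) :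
    ∀ e : ℕ, ∀ i j k : Fin n, i < j → (j:ℕ) + (e + 1) = k →
      (c j).SeparatesSets (c i).carrier (c k).carrier := by
  intro e
  induction e with
  | zero =>
    intro i j k hij hjk
    have : ∃ d : ℕ, (i:ℕ) + (d + 1) = j := ⟨(j:ℕ) - (i:ℕ) - 1, by omega⟩
    obtain ⟨d, hd⟩ := this
    exact chain_sep_left hc d i j k hd (by omega)
  | succ e ih =>
    intro i j k hij hjk
    have hk1 : (k:ℕ) - 1 < n := by omega
    set k' : Fin n := ⟨(k:ℕ) - 1, hk1⟩ with hk'def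
    have e2 : (j:ℕ) + (e + 1) = (k':ℕ) := by simp [hk'def]; omega
    have IH := ih i j k' hij e2
    have hjk' : j < k' := by
      rw [Fin.lt_def]
      omega
    have LL : (c k').SeparatesSets (c j).carrier (c k).carrier := by
      have : ∃ d : ℕ, (j:ℕ) + (d + 1) = k' := ⟨e, e2⟩
      obtain ⟨d, hd⟩ := this
      exact chain_sep_left hc d j k' k hd (by simp [hk'def]; omega)
    rw [Curtain.sep_iff] at IH LL ⊢
    obtain ⟨σ, hIH1, hIH2⟩ := IH
    obtain ⟨τ, hLL1, hLL2⟩ := LL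
    refine ⟨σ, hIH1, ?_⟩
    intro x hxk
    have hjk2 : j ≠ k := by
      intro hh
      rw [hh] at hjk
      omega
    refine sep_transfer (c k') (c j) τ (!σ) x hIH2 hLL1 (hLL2 hxk) ?_
    · intro hxj
      exact Set.disjoint_left.1 (hc.1 k j (Ne.symm hjk2)) hxk hxj

/-- The general three-point separation property of chains. -/
lemma chain_sep' (hc : IsChainSeq c) {i j k : Fin n} (hij : i < j) (hjk : j < k) :
    (c j).SeparatesSets (c i).carrier (c k).carrier := by
  have : ∃ e : ℕ, (j:ℕ) + (e + 1) = k := ⟨(k:ℕ) - (j:ℕ) - 1, by omega⟩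
  obtain ⟨e, he⟩ := this
  exact chain_sep hc e i j k hij he

/-- A monotone subsequence of a chain is a chain. -/
lemma subchain {m : ℕ} (σ : Fin m → Fin n) (hσ : StrictMono σ) (hc : IsChainSeq c) :
    IsChainSeq (c ∘ σ) := by
  constructor
  · intro i j hij
    exact hc.1 (σ i) (σ j) (fun hh => hij (hσ.injective hh))
  · intro i j k hij hjk
    have h1 : σ i < σ j := hσ (by rw [Fin.lt_def]; omega)
    have h2 : σ j < σ k := hσ (by rw [Fin.lt_def]; omega)
    exact chain_sep' hc h1 h2

end Chains
/-- A chain separating two points has at most `2 d(x,y) + 1` members. -/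
lemma chain_bound {x y : X} (hxy : x ≠ y) {n : ℕ} {c : Fin n → Curtain X}
    (hdisj : ∀ i j, i ≠ j → Disjoint (c i).carrier (c j).carrier)
    (hs : SeparatesChain c x y) : (n : ℝ) ≤ 2 * dist x y + 1 := by
  classical
  rcases Nat.eq_zero_or_pos n with hn0 | hn0
  · subst hn0
    simp
    positivity
  have hd : 0 < dist x y := dist_pos.2 hxy
  obtain ⟨N, p, ε, hN, hε0, hεδ, hNε, hp0, hpN, hpair⟩ :=
    exists_path x y (δ := 1/2) (by norm_num)
  have hεpos : 0 < ε := by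
    rcases eq_or_lt_of_le hε0 with h | h
    · rw [← h, mul_zero] at hNε
      linarith
    · exact h
  have key : ∀ i : Fin n, ∃ a b : ℕ, a < b ∧ b ≤ N ∧
      (∀ t, a < t → t < b → p t ∈ (c i).carrier) ∧ (1:ℝ) < ((b:ℝ) - a) * ε := by
    intro i
    obtain ⟨s, hxs, hys⟩ := Curtain.sep_iff.1 (hs i)
    have hx0 : (c i).rs s + 1/2 < (c i).sf s x := Curtain.mem_side.1 (hxs rfl)
    have hyN : (c i).sf s y < (c i).rs s - 1/2 := Curtain.mem_side_not.1 (hys rfl)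
    have hb : ∃ j, j ≤ N ∧ (c i).sf s (p j) < (c i).rs s - 1/2 := ⟨N, le_rfl, by rwa [hpN]⟩
    obtain ⟨b, hbdef⟩ : ∃ b, b = Nat.find hb := ⟨_, rfl⟩
    have hbN : b ≤ N := by rw [hbdef]; exact (Nat.find_spec hb).1
    have hfb : (c i).sf s (p b) < (c i).rs s - 1/2 := by rw [hbdef]; exact (Nat.find_spec hb).2
    have hmin : ∀ t, t < b → (c i).rs s - 1/2 ≤ (c i).sf s (p t) := by
      intro t htb
      rw [hbdef] at htb
      have := Nat.find_min hb htb
      beta_reduce at this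
      push_neg at this
      exact this (by omega)
    have hb0 : b ≠ 0 := by
      intro h0
      rw [h0, hp0] at hfb
      linarith
    set P : ℕ → Prop := fun t => (c i).rs s + 1/2 < (c i).sf s (p t) with hPdef
    have hP0 : P 0 := by rw [hPdef]; beta_reduce; rw [hp0]; exact hx0
    obtain ⟨a, hadef⟩ : ∃ a, a = Nat.findGreatest P (b - 1) := ⟨_, rfl⟩
    have haP : P a := by rw [hadef]; exact Nat.findGreatest_spec (Nat.zero_le _) hP0
    have hab1 : a ≤ b - 1 := by rw [hadef]; exact Nat.findGreatest_le _
    have hgr : ∀ t, a < t → t ≤ b - 1 → ¬ P t := by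
      intro t h1 h2
      rw [hadef] at h1
      exact Nat.findGreatest_is_greatest h1 h2
    have hab : a < b := by omega
    have haPval : (c i).rs s + 1/2 < (c i).sf s (p a) := haP
    refine ⟨a, b, hab, hbN, ?_, ?_⟩
    · intro t hat htb
      have h1 : ¬ P t := hgr t hat (by omega)
      rw [hPdef] at h1
      push_neg at h1
      beta_reduce at h1
      have h3 := hmin t htb
      rw [Curtain.mem_carrier_sf s, abs_le]
      constructor <;> linarith
    · have hlip := (c i).sf_lip s (p a) (p b)
      rw [hpair a b hab.le hbN] at hlip
      calc (1:ℝ) < (c i).sf s (p a) - (c i).sf s (p b) := by linarith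
        _ ≤ |(c i).sf s (p a) - (c i).sf s (p b)| := le_abs_self _
        _ ≤ ((b:ℝ) - a) * ε := hlip
  choose a b hab hbN hcar hgap using key
  set F : Fin n → Finset ℕ := fun i => Finset.Ioo (a i) (b i) with hFdef
  have hFdisj : ∀ i j : Fin n, i ≠ j → Disjoint (F i) (F j) := by
    intro i j hij
    rw [Finset.disjoint_left]
    intro t hti htj
    rw [hFdef] at hti htj
    simp only [Finset.mem_Ioo] at hti htj
    exact Set.disjoint_left.1 (hdisj i j hij) (hcar i t hti.1 hti.2) (hcar j t htj.1 htj.2)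
  have hsub : (Finset.univ : Finset (Fin n)).biUnion F ⊆ Finset.range (N + 1) := by
    intro t ht
    rw [Finset.mem_biUnion] at ht
    obtain ⟨i, _, hti⟩ := ht
    rw [hFdef] at hti
    simp only [Finset.mem_Ioo] at hti
    rw [Finset.mem_range]
    have := hbN i
    omega
  have hcount : ∑ i : Fin n, (F i).card ≤ N + 1 := by
    rw [← Finset.card_biUnion (fun i _ => fun j _ hij => hFdisj i j hij)]
    calc ((Finset.univ : Finset (Fin n)).biUnion F).card ≤ (Finset.range (N+1)).card :=
        Finset.card_le_card hsub
      _ = N + 1 := Finset.card_range _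
  have hcardF : ∀ i : Fin n, ((F i).card : ℝ) = (b i : ℝ) - a i - 1 := by
    intro i
    rw [hFdef]
    simp only [Nat.card_Ioo]
    have h := hab i
    rw [Nat.cast_sub (by omega : 1 ≤ b i - a i), Nat.cast_sub (by omega : a i ≤ b i)]
    push_cast
    ring
  have hterm : ∀ i : Fin n, 1/ε - 1 < ((F i).card : ℝ) := by
    intro i
    rw [hcardF i]
    have h1 : 1/ε < (b i : ℝ) - a i := by
      rw [div_lt_iff₀ hεpos]
      linarith [hgap i]
    linarith
  have hsumreal : (n : ℝ) * (1/ε - 1) ≤ ((N:ℝ) + 1) := by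
    have h1 : (n : ℝ) * (1/ε - 1) ≤ ∑ i : Fin n, ((F i).card : ℝ) := by
      have e : (n : ℝ) * (1/ε - 1) = ∑ _i : Fin n, (1/ε - 1) := by
        rw [Finset.sum_const, Finset.card_univ, Fintype.card_fin, nsmul_eq_mul]
      rw [e]
      exact Finset.sum_le_sum (fun i _ => (hterm i).le)
    have h2 : (∑ i : Fin n, ((F i).card : ℝ)) ≤ (N:ℝ) + 1 := by
      calc (∑ i : Fin n, ((F i).card : ℝ)) = ((∑ i : Fin n, (F i).card : ℕ) : ℝ) :=
          (Nat.cast_sum _ _).symm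
        _ ≤ (N:ℝ) + 1 := by exact_mod_cast hcount
    linarith
  have hfin : (n:ℝ) * (1 - ε) ≤ dist x y + ε := by
    have h := mul_le_mul_of_nonneg_right hsumreal hεpos.le
    have e2 : (n:ℝ) * (1/ε - 1) * ε = (n:ℝ) * (1 - ε) := by
      field_simp
    have e3 : ((N:ℝ) + 1) * ε = dist x y + ε := by rw [add_mul, one_mul, hNε]
    rw [e2, e3] at h
    exact h
  nlinarith [hfin, hεδ, Nat.cast_nonneg (α := ℝ) n]
omit [CAT0 X] in
lemma Curtain.separatesPts_symm (h : Curtain X) (x y : X) (hs : h.SeparatesPts x y) :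
    h.SeparatesPts y x := by
  rcases hs with ⟨h1, h2⟩ | ⟨h1, h2⟩
  · exact Or.inr ⟨h2, h1⟩
  · exact Or.inl ⟨h2, h1⟩

omit [CAT0 X] in
lemma chainNum_symm (L : ℕ∞) (x y : X) : chainNum L x y = chainNum L y x := by
  unfold chainNum
  congr 1
  ext m
  constructor <;> rintro ⟨c, h1, h2⟩ <;>
    exact ⟨c, h1, fun i => Curtain.separatesPts_symm _ _ _ (h2 i)⟩

omit [CAT0 X] in
lemma sset_nonempty (L : ℕ∞) (x y : X) :
    Set.Nonempty {m : ℕ | ∃ c : Fin m → Curtain X, IsLChain L c ∧ SeparatesChain c x y} := by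
  refine ⟨0, fun i => i.elim0, ⟨⟨fun i => i.elim0, fun i => i.elim0⟩, fun i => i.elim0⟩,
    fun i => i.elim0⟩

lemma sset_bdd (L : ℕ∞) {x y : X} (hxy : x ≠ y) :
    BddAbove {m : ℕ | ∃ c : Fin m → Curtain X, IsLChain L c ∧ SeparatesChain c x y} := by
  refine ⟨Nat.ceil (2 * dist x y + 1), ?_⟩
  rintro m ⟨c, hL, hsep⟩
  have h1 : (m : ℝ) ≤ 2 * dist x y + 1 := chain_bound hxy hL.1.1 hsep
  have h2 : (2 * dist x y + 1 : ℝ) ≤ (Nat.ceil (2 * dist x y + 1) : ℝ) := Nat.le_ceil _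
  exact_mod_cast le_trans h1 h2

lemma chainNum_triangle (L : ℕ∞) {x y z : X} (hxz : x ≠ z) (hxy : x ≠ y) (hyz : y ≠ z) :
    chainNum L x z ≤ 1 + chainNum L x y + chainNum L y z := by
  classical
  rw [chainNum]
  apply csSup_le (sset_nonempty L x z)
  rintro m ⟨c, hL, hsep⟩
  set Sxy : Finset (Fin m) := Finset.univ.filter (fun i => (c i).SeparatesPts x y) with hSxy
  set Syz : Finset (Fin m) := Finset.univ.filter (fun i => (c i).SeparatesPts y z) with hSyz
  set T : Finset (Fin m) := Finset.univ.filter (fun i => y ∈ (c i).carrier) with hT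
  have hcover : (Finset.univ : Finset (Fin m)) ⊆ Sxy ∪ Syz ∪ T := by
    intro i _
    obtain ⟨s, hxs, hzs⟩ := Curtain.sep_iff.1 (hsep i)
    by_cases hyc : y ∈ (c i).carrier
    · simp only [hT, Finset.mem_union, Finset.mem_filter, Finset.mem_univ, true_and]
      tauto
    · rcases Curtain.not_mem_carrier_side hyc s with hy | hy
      · -- y on same side as x: c i separates y from z
        have : (c i).SeparatesPts y z := Curtain.sep_iff.2 ⟨s, by
          intro w hw; rw [Set.mem_singleton_iff] at hw; subst hw; exact hy, hzs⟩
        simp only [hSyz, Finset.mem_union, Finset.mem_filter, Finset.mem_univ, true_and]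
        tauto
      · have : (c i).SeparatesPts x y := Curtain.sep_iff.2 ⟨s, hxs, by
          intro w hw; rw [Set.mem_singleton_iff] at hw; subst hw; exact hy⟩
        simp only [hSxy, Finset.mem_union, Finset.mem_filter, Finset.mem_univ, true_and]
        tauto
  have hTcard : T.card ≤ 1 := by
    rw [Finset.card_le_one]
    intro i hi j hj
    by_contra hij
    simp only [hT, Finset.mem_filter] at hi hj
    exact Set.disjoint_left.1 (hL.1.1 i j hij) hi.2 hj.2
  have hm : m ≤ Sxy.card + Syz.card + 1 := by
    have h1 : m = (Finset.univ : Finset (Fin m)).card := by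
      rw [Finset.card_univ, Fintype.card_fin]
    have h2 : (Finset.univ : Finset (Fin m)).card ≤ (Sxy ∪ Syz ∪ T).card :=
      Finset.card_le_card hcover
    have h3 : (Sxy ∪ Syz ∪ T).card ≤ (Sxy ∪ Syz).card + T.card := Finset.card_union_le _ _
    have h4 : (Sxy ∪ Syz).card ≤ Sxy.card + Syz.card := Finset.card_union_le _ _
    omega
  -- subchains
  have hsub : ∀ (S : Finset (Fin m)) (w w' : X), w ≠ w' →
      (∀ i ∈ S, (c i).SeparatesPts w w') → S.card ≤ chainNum L w w' := by
    intro S w w' hww hSsep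
    set k := S.card with hk
    set σ : Fin k → Fin m := fun t => (S.orderIsoOfFin hk.symm t : Fin m) with hσ
    have hmono : StrictMono σ := by
      intro t t' ht
      exact (S.orderIsoOfFin hk.symm).strictMono ht
    have hchain : IsLChain L (c ∘ σ) := by
      refine ⟨subchain σ hmono hL.1, ?_⟩
      intro i j hij
      exact hL.2 (σ i) (σ j) (fun hh => hij (hmono.injective hh))
    have hsepc : SeparatesChain (c ∘ σ) w w' := by
      intro t
      exact hSsep (σ t) (S.orderIsoOfFin hk.symm t).2
    have hmem : k ∈ {m : ℕ | ∃ c : Fin m → Curtain X, IsLChain L c ∧ SeparatesChain c w w'} :=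
      ⟨c ∘ σ, hchain, hsepc⟩
    exact le_csSup (sset_bdd L hww) hmem
  have hxysub : ∀ i ∈ Sxy, (c i).SeparatesPts x y := by
    intro i hi
    simp only [hSxy, Finset.mem_filter] at hi
    exact hi.2
  have hyzsub : ∀ i ∈ Syz, (c i).SeparatesPts y z := by
    intro i hi
    simp only [hSyz, Finset.mem_filter] at hi
    exact hi.2
  have h1 := hsub Sxy x y hxy hxysub
  have h2 := hsub Syz y z hyz hyzsub
  omega

end Aux

/-- for every `L ∈ ℕ ∪ {∞}` the function `d_L` is a metric. -/
theorem stmt6 {X : Type*} [MetricSpace X] [CAT0 X] (L : ℕ∞) :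
    (∀ x y : X, 0 ≤ dL L x y) ∧
    (∀ x y : X, dL L x y = 0 ↔ x = y) ∧
    (∀ x y : X, dL L x y = dL L y x) ∧
    (∀ x y z : X, dL L x z ≤ dL L x y + dL L y z) := by
  classical
  have hnonneg : ∀ x y : X, 0 ≤ dL L x y := by
    intro x y
    rw [dL]
    split
    · exact le_refl 0
    · positivity
  have hzero : ∀ x : X, dL L x x = 0 := by
    intro x
    rw [dL, if_pos rfl]
  refine ⟨hnonneg, ?_, ?_, ?_⟩
  · intro x y
    constructor
    · intro hc
      by_contra hxy
      rw [dL, if_neg hxy] at hc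
      have := Nat.cast_nonneg (α := ℝ) (chainNum L x y)
      linarith
    · intro hc
      subst hc
      exact hzero x
  · intro x y
    by_cases hxy : x = y
    · subst hxy
      rfl
    · rw [dL, dL, if_neg hxy, if_neg (Ne.symm hxy), chainNum_symm]
  · intro x y z
    by_cases hxz : x = z
    · subst hxz
      rw [hzero x]
      exact add_nonneg (hnonneg x y) (hnonneg y x)
    by_cases hxy : x = y
    · subst hxy
      rw [hzero x, zero_add]
    by_cases hyz : y = z
    · subst hyz
      rw [hzero y, add_zero]
    rw [dL, dL, dL, if_neg hxz, if_neg hxy, if_neg hyz]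
    have h := chainNum_triangle L hxz hxy hyz
    have hcast : (chainNum L x z : ℝ) ≤ 1 + (chainNum L x y : ℝ) + (chainNum L y z : ℝ) := by
      exact_mod_cast h
    linarith

end Curtains
end

section
/- No bigons across separated curtains: let h and k be L-separated curtains and α a CAT(0) geodesic. If there exist t₁ < t₂ < t₃ < t₄ with α(t₁) ∈ h, α(t₂) ∈ k, α(t₃) ∈ k, α(t₄) ∈ h (or with α(t₁) ∈ h, α(t₂) ∈ k, α(t₃) ∈ h, α(t₄) ∈ k), then t₃ − t₂ ≤ L + 1. -/
open Metric Set

namespace Curtains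

variable {X : Type*} [MetricSpace X]

/-! ### Auxiliary lemmas -/

section Aux

variable {Y : Type*} [MetricSpace Y]

/-- In a CAT(0) space, minimizers of the distance to a geodesic are unique. -/
theorem proj_unique [CAT0 Y] (g : Geodesic Y) (x : Y) {u v : ℝ}
    (hu : u ∈ g.I) (hv : v ∈ g.I)
    (hmu : ∀ t ∈ g.I, dist x (g.map u) ≤ dist x (g.map t))
    (hmv : ∀ t ∈ g.I, dist x (g.map v) ≤ dist x (g.map t)) : u = v := by
  have hmmem : (u + v) / 2 ∈ g.I := by
    rcases le_total u v with huv | huv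
    · exact g.ordConn.out hu hv ⟨by linarith, by linarith⟩
    · exact g.ordConn.out hv hu ⟨by linarith, by linarith⟩
  have h1 : dist (g.map u) (g.map ((u + v) / 2)) = dist (g.map u) (g.map v) / 2 := by
    rw [g.isom u hu _ hmmem, g.isom u hu v hv]
    rw [show u - (u + v) / 2 = (u - v) / 2 by ring, abs_div]
    norm_num
  have h2 : dist (g.map v) (g.map ((u + v) / 2)) = dist (g.map u) (g.map v) / 2 := by
    rw [g.isom v hv _ hmmem, g.isom u hu v hv]
    rw [show v - (u + v) / 2 = -((u - v) / 2) by ring, abs_neg, abs_div]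
    norm_num
  have hcn := CAT0.cn (g.map u) (g.map v) x (g.map ((u + v) / 2)) h1 h2
  have hax : dist x (g.map u) = dist x (g.map v) :=
    le_antisymm (hmu v hv) (hmv u hu)
  have hle : dist x (g.map u) ≤ dist x (g.map ((u + v) / 2)) := hmu _ hmmem
  have hdd : dist (g.map u) (g.map v) = |u - v| := g.isom u hu v hv
  have h0 : |u - v| ^ 2 ≤ 0 := by
    have h1' : dist x (g.map u) ^ 2 ≤ dist x (g.map ((u + v) / 2)) ^ 2 := by
      have := dist_nonneg (x := x) (y := g.map u)
      nlinarith
    rw [← hax] at hcn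
    rw [← hdd] at *
    linarith
  have : |u - v| = 0 := by nlinarith [abs_nonneg (u - v)]
  have := abs_eq_zero.mp this
  linarith

/-- The projection of a point on the geodesic is the point itself. -/
theorem proj_map (g : Geodesic Y) {u : ℝ} (hu : u ∈ g.I) : g.proj (g.map u) = u := by
  have h0 : dist (g.map u) (g.map (g.proj (g.map u))) ≤ dist (g.map u) (g.map u) :=
    g.proj_min (g.map u) u hu
  rw [dist_self] at h0
  have h1 : dist (g.map u) (g.map (g.proj (g.map u))) = 0 :=
    le_antisymm h0 dist_nonneg
  rw [g.isom u hu _ (g.proj_mem (g.map u)), abs_eq_zero] at h1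
  linarith

/-- A point between `x` and its projection has the same projection as `x`. -/
theorem between_proj [CAT0 Y] (g : Geodesic Y) (x z : Y)
    (hbtw : dist x z + dist z (g.map (g.proj x)) = dist x (g.map (g.proj x))) :
    g.proj z = g.proj x := by
  have key : dist x (g.map (g.proj z)) = dist x (g.map (g.proj x)) := by
    have h1 : dist x (g.map (g.proj z)) ≤ dist x (g.map (g.proj x)) := by
      calc dist x (g.map (g.proj z)) ≤ dist x z + dist z (g.map (g.proj z)) := dist_triangle _ _ _
        _ ≤ dist x z + dist z (g.map (g.proj x)) := by
            have := g.proj_min z (g.proj x) (g.proj_mem x)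
            linarith
        _ = dist x (g.map (g.proj x)) := hbtw
    exact le_antisymm h1 (g.proj_min x (g.proj z) (g.proj_mem z))
  refine proj_unique g x (g.proj_mem z) (g.proj_mem x) ?_ (g.proj_min x)
  intro t ht
  rw [key]
  exact g.proj_min x t ht

/-- Quantitative continuity modulus for the closest-point projection. -/
theorem proj_modulus [CAT0 Y] (g : Geodesic Y) (x y : Y) :
    (g.proj x - g.proj y) ^ 2 ≤
      8 * dist x y * (dist y (g.map (g.proj y)) + dist x y) := by
  set u := g.proj x with hu'
  set v := g.proj y with hv'
  have hu : u ∈ g.I := g.proj_mem x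
  have hv : v ∈ g.I := g.proj_mem y
  have hmmem : (u + v) / 2 ∈ g.I := by
    rcases le_total u v with huv | huv
    · exact g.ordConn.out hu hv ⟨by linarith, by linarith⟩
    · exact g.ordConn.out hv hu ⟨by linarith, by linarith⟩
  have h1 : dist (g.map u) (g.map ((u + v) / 2)) = dist (g.map u) (g.map v) / 2 := by
    rw [g.isom u hu _ hmmem, g.isom u hu v hv]
    rw [show u - (u + v) / 2 = (u - v) / 2 by ring, abs_div]
    norm_num
  have h2 : dist (g.map v) (g.map ((u + v) / 2)) = dist (g.map u) (g.map v) / 2 := by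
    rw [g.isom v hv _ hmmem, g.isom u hu v hv]
    rw [show v - (u + v) / 2 = -((u - v) / 2) by ring, abs_neg, abs_div]
    norm_num
  have hcn := CAT0.cn (g.map u) (g.map v) x (g.map ((u + v) / 2)) h1 h2
  set a := dist x (g.map u) with ha'
  set b := dist y (g.map v) with hb'
  set D := dist x y with hD'
  set b' := dist x (g.map v) with hb''
  have hle : a ≤ dist x (g.map ((u + v) / 2)) := g.proj_min x _ hmmem
  have hdd : dist (g.map u) (g.map v) = |u - v| := g.isom u hu v hv
  have hp2 : |u - v| ^ 2 ≤ 2 * b' ^ 2 - 2 * a ^ 2 := by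
    have h1' : a ^ 2 ≤ dist x (g.map ((u + v) / 2)) ^ 2 := by
      have := dist_nonneg (x := x) (y := g.map u)
      nlinarith
    rw [← hdd]
    linarith
  have hb'le : b' ≤ D + b := by
    calc b' ≤ dist x y + dist y (g.map v) := dist_triangle _ _ _
      _ = D + b := by rw [hD', hb']
  have hba : b ≤ D + a := by
    calc b ≤ dist y (g.map u) := g.proj_min y u hu
      _ ≤ dist y x + dist x (g.map u) := dist_triangle _ _ _
      _ = D + a := by rw [dist_comm y x]
  have ha0 : 0 ≤ a := dist_nonneg
  have hb0 : 0 ≤ b := dist_nonneg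
  have hD0 : 0 ≤ D := dist_nonneg
  have hb'0 : 0 ≤ b' := dist_nonneg
  have habs : (u - v) ^ 2 = |u - v| ^ 2 := (sq_abs _).symm
  rw [habs]
  have h3 : b' ^ 2 ≤ (D + b) ^ 2 := by nlinarith
  rcases le_total b D with hc | hc
  · nlinarith [sq_nonneg a, mul_nonneg hb0 hD0, mul_nonneg hD0 hD0]
  · have h4 : (0:ℝ) ≤ (a - b + D) * (a + b - D) :=
      mul_nonneg (by linarith) (by linarith)
    nlinarith [mul_nonneg hb0 hD0, mul_nonneg hD0 hD0]

/-- Dyadic chains between two points via CAT(0) midpoints. -/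
theorem midchain [CAT0 Y] (x y : Y) (n : ℕ) :
    ∃ z : ℕ → Y, z 0 = x ∧ z (2^n) = y ∧
      (∀ j ≤ 2^n, dist x (z j) = j * dist x y / 2^n ∧
        dist (z j) y = ((2^n : ℝ) - j) * dist x y / 2^n) ∧
      (∀ j < 2^n, dist (z j) (z (j+1)) = dist x y / 2^n) := by
  induction n with
  | zero =>
    refine ⟨fun j => if j = 0 then x else y, by simp, by simp, ?_, ?_⟩
    · intro j hj
      interval_cases j <;> simp [dist_comm]
    · intro j hj
      interval_cases j
      simp
  | succ n ih =>
    obtain ⟨z, hz0, hzN, hdist, hstep⟩ := ih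
    choose mid hmid1 hmid2 using CAT0.midpoint (X := Y)
    set d := dist x y with hd
    have hd0 : 0 ≤ d := dist_nonneg
    have h2n : ((2:ℝ)^n) ≠ 0 := by positivity
    refine ⟨fun j => if Even j then z (j / 2) else mid (z (j / 2)) (z (j / 2 + 1)),
      by simp [hz0], ?_, ?_, ?_⟩
    · have he : Even (2^(n+1)) := by
        refine ⟨2^n, ?_⟩
        rw [pow_succ]; ring
      have hq : 2^(n+1) / 2 = 2^n := by omega
      simp [he, hq, hzN]
    · intro j hj
      rcases Nat.even_or_odd j with hev | hod
      · obtain ⟨m, hm⟩ := hev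
        have hm2 : j / 2 = m := by omega
        have hmle : m ≤ 2^n := by
          have : 2^(n+1) = 2 * 2^n := by rw [pow_succ]; ring
          omega
        obtain ⟨hxa, hya⟩ := hdist m hmle
        have hjr : (j:ℝ) = 2 * m := by
          have : j = 2 * m := by omega
          rw [this]; push_cast; ring
        have hev' : Even j := ⟨m, hm⟩
        constructor
        · simp only [if_pos hev', hm2]
          rw [hxa, hjr, pow_succ]
          field_simp
        · simp only [if_pos hev', hm2]
          rw [hya, hjr, pow_succ]
          field_simp
      · obtain ⟨m, hm⟩ := hod
        have hnev : ¬ Even j := by simp [hm, parity_simps]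
        have hm2 : j / 2 = m := by omega
        have hmlt : m < 2^n := by
          have : 2^(n+1) = 2 * 2^n := by rw [pow_succ]; ring
          omega
        obtain ⟨hxa, hya⟩ := hdist m hmlt.le
        obtain ⟨hxb, hyb⟩ := hdist (m+1) hmlt
        have he := hstep m hmlt
        have hma : dist (z m) (mid (z m) (z (m+1))) = d / 2^n / 2 := by
          rw [hmid1, he]
        have hmb : dist (z (m+1)) (mid (z m) (z (m+1))) = d / 2^n / 2 := by
          rw [hmid2, he]
        have hjr : (j:ℝ) = 2 * m + 1 := by rw [hm]; push_cast; ring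
        have hub : dist x (mid (z m) (z (m+1))) ≤ (m:ℝ) * d / 2^n + d / 2^n / 2 := by
          calc dist x (mid (z m) (z (m+1)))
              ≤ dist x (z m) + dist (z m) (mid (z m) (z (m+1))) := dist_triangle _ _ _
            _ = (m:ℝ) * d / 2^n + d / 2^n / 2 := by rw [hxa, hma]
        have hlb : ((m:ℝ)+1) * d / 2^n ≤ dist x (mid (z m) (z (m+1))) + d / 2^n / 2 := by
          calc ((m:ℝ)+1) * d / 2^n = dist x (z (m+1)) := by rw [hxb]; push_cast; ring
            _ ≤ dist x (mid (z m) (z (m+1))) + dist (mid (z m) (z (m+1))) (z (m+1)) :=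
                dist_triangle _ _ _
            _ = dist x (mid (z m) (z (m+1))) + d / 2^n / 2 := by
                rw [dist_comm (mid (z m) (z (m+1))) (z (m+1)), hmb]
        have hxeq : dist x (mid (z m) (z (m+1))) = (j:ℝ) * d / 2^(n+1) := by
          rw [hjr, pow_succ]
          have : dist x (mid (z m) (z (m+1))) = (m:ℝ) * d / 2^n + d / 2^n / 2 := by
            have hrel : ((m:ℝ)+1) * d / 2^n = (m:ℝ) * d / 2^n + d / 2^n := by ring
            linarith
          rw [this]; field_simp
        have hub' : dist (mid (z m) (z (m+1))) y ≤ ((2:ℝ)^n - (m+1)) * d / 2^n + d / 2^n / 2 := by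
          calc dist (mid (z m) (z (m+1))) y
              ≤ dist (mid (z m) (z (m+1))) (z (m+1)) + dist (z (m+1)) y := dist_triangle _ _ _
            _ = d / 2^n / 2 + ((2:ℝ)^n - (m+1)) * d / 2^n := by
                rw [dist_comm (mid (z m) (z (m+1))) (z (m+1)), hmb, hyb]; push_cast; ring
            _ = ((2:ℝ)^n - (m+1)) * d / 2^n + d / 2^n / 2 := by ring
        have hlb' : ((2:ℝ)^n - m) * d / 2^n ≤ dist (mid (z m) (z (m+1))) y + d / 2^n / 2 := by
          calc ((2:ℝ)^n - m) * d / 2^n = dist (z m) y := by rw [hya]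
            _ ≤ dist (z m) (mid (z m) (z (m+1))) + dist (mid (z m) (z (m+1))) y :=
                dist_triangle _ _ _
            _ = dist (mid (z m) (z (m+1))) y + d / 2^n / 2 := by rw [hma]; ring
        have hyeq : dist (mid (z m) (z (m+1))) y = ((2:ℝ)^(n+1) - j) * d / 2^(n+1) := by
          rw [hjr, pow_succ]
          have : dist (mid (z m) (z (m+1))) y = ((2:ℝ)^n - (m+1)) * d / 2^n + d / 2^n / 2 := by
            have hrel : ((2:ℝ)^n - (m:ℝ)) * d / 2^n = ((2:ℝ)^n - ((m:ℝ)+1)) * d / 2^n + d / 2^n := by ring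
            linarith
          rw [this]; field_simp; ring
        constructor
        · simp only [if_neg hnev, hm2]
          exact hxeq
        · simp only [if_neg hnev, hm2]
          exact hyeq
    · intro j hj
      rcases Nat.even_or_odd j with hev | hod
      · obtain ⟨m, hm⟩ := hev
        have hm2 : j / 2 = m := by omega
        have hmlt : m < 2^n := by
          have : 2^(n+1) = 2 * 2^n := by rw [pow_succ]; ring
          omega
        have hodd1 : ¬ Even (j+1) := by simp [hm, parity_simps]
        have hm21 : (j+1) / 2 = m := by omega
        have hev' : Even j := ⟨m, hm⟩
        simp only [if_pos hev', if_neg hodd1, hm2, hm21]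
        rw [hmid1, hstep m hmlt, pow_succ]
        ring
      · obtain ⟨m, hm⟩ := hod
        have hnev : ¬ Even j := by simp [hm, parity_simps]
        have hm2 : j / 2 = m := by omega
        have hmlt : m < 2^n := by
          have : 2^(n+1) = 2 * 2^n := by rw [pow_succ]; ring
          omega
        have hev1 : Even (j+1) := by
          refine ⟨m+1, by omega⟩
        have hm21 : (j+1) / 2 = m + 1 := by omega
        simp only [if_neg hnev, if_pos hev1, hm2, hm21]
        rw [dist_comm, hmid2, hstep m hmlt, pow_succ]
        ring

/-- Concatenation of discrete paths. -/
theorem concat_path (Q : Y → Prop) (δ : ℝ) (N1 N2 : ℕ) (w1 w2 : ℕ → Y)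
    (hjoin : w1 N1 = w2 0)
    (s1 : ∀ j < N1, dist (w1 j) (w1 (j+1)) ≤ δ) (s2 : ∀ j < N2, dist (w2 j) (w2 (j+1)) ≤ δ)
    (q1 : ∀ j ≤ N1, Q (w1 j)) (q2 : ∀ j ≤ N2, Q (w2 j)) :
    ∃ w : ℕ → Y, w 0 = w1 0 ∧ w (N1+N2) = w2 N2 ∧
      (∀ j < N1+N2, dist (w j) (w (j+1)) ≤ δ) ∧ (∀ j ≤ N1+N2, Q (w j)) := by
  refine ⟨fun j => if j ≤ N1 then w1 j else w2 (j - N1), by simp, ?_, ?_, ?_⟩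
  · by_cases hN : N2 = 0
    · subst hN; simp [hjoin]
    · have hn : ¬ (N1 + N2 ≤ N1) := by omega
      have he : N1 + N2 - N1 = N2 := by omega
      simp only [if_neg hn, he]
  · intro j hj
    by_cases h1 : j + 1 ≤ N1
    · have h2 : j ≤ N1 := by omega
      simp only [if_pos h1, if_pos h2]
      exact s1 j (by omega)
    · by_cases h2 : j ≤ N1
      · have hje : j = N1 := by omega
        have hN2 : 0 < N2 := by omega
        simp only [if_pos h2, if_neg h1]
        have he : j + 1 - N1 = 1 := by omega
        rw [he, hje, hjoin]
        exact s2 0 hN2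
      · simp only [if_neg h2, if_neg h1]
        have he : j + 1 - N1 = (j - N1) + 1 := by omega
        rw [he]
        exact s2 (j - N1) (by omega)
  · intro j hj
    by_cases h2 : j ≤ N1
    · simp only [if_pos h2]; exact q1 j h2
    · simp only [if_neg h2]; exact q2 (j - N1) (by omega)

theorem abs_sub_le_one_of_mem_Icc {r a b : ℝ} (ha : a ∈ Icc (r - 1/2) (r + 1/2))
    (hb : b ∈ Icc (r - 1/2) (r + 1/2)) : |a - b| ≤ 1 := by
  have h1 := ha.1; have h2 := ha.2; have h3 := hb.1; have h4 := hb.2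
  rw [abs_le]
  constructor <;> linarith

set_option maxHeartbeats 1000000 in
/-- Inside a curtain, any two points are joined by a discrete path with small
steps, staying in the curtain and at bounded distance from the first point. -/
theorem exists_discrete_path [CAT0 Y] (W : Curtain Y) (p q : Y)
    (hp : p ∈ W.carrier) (hq : q ∈ W.carrier) (δ : ℝ) (hδ : 0 < δ) :
    ∃ (N : ℕ) (w : ℕ → Y), w 0 = p ∧ w N = q ∧
      (∀ j < N, dist (w j) (w (j+1)) ≤ δ) ∧
      (∀ j ≤ N, w j ∈ W.carrier ∧
        dist p (w j) ≤ dist p (W.geo.map (W.geo.proj p)) + dist q (W.geo.map (W.geo.proj q)) + 1) := by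
  set g := W.geo with hg
  set up := g.proj p with hup'
  set uq := g.proj q with huq'
  have hupI : up ∈ Icc (W.r - 1/2) (W.r + 1/2) := hp
  have huqI : uq ∈ Icc (W.r - 1/2) (W.r + 1/2) := hq
  set P := g.map up with hP'
  set Q' := g.map uq with hQ''
  set dp' := dist p P with hdp'
  set dq' := dist q Q' with hdq'
  have hdp0 : 0 ≤ dp' := dist_nonneg
  have hdq0 : 0 ≤ dq' := dist_nonneg
  set B := dp' + dq' + 1 with hB
  set Qpred : Y → Prop := fun x => x ∈ W.carrier ∧ dist p x ≤ B with hQpred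
  have habs : |uq - up| ≤ 1 := abs_sub_le_one_of_mem_Icc huqI hupI
  -- Segment A : midchain from p to P
  obtain ⟨n₁, hn₁⟩ := pow_unbounded_of_one_lt (dp' / δ) (one_lt_two (α := ℝ))
  have hstepA : dp' / 2 ^ n₁ ≤ δ := by
    rw [div_le_iff₀ (by positivity)]
    rw [div_lt_iff₀ hδ] at hn₁
    nlinarith
  obtain ⟨zA, hzA0, hzAN, hdistA, hstepA'⟩ := midchain p P n₁
  have h2n₁ : ((2:ℝ) ^ n₁) ≠ 0 := by positivity
  have hfoldp : g.map (g.proj p) = P := by rw [hP', hup']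
  have hQA : ∀ j ≤ 2 ^ n₁, Qpred (zA j) := by
    intro j hj
    obtain ⟨hxa, hya⟩ := hdistA j hj
    have hbtw : dist p (zA j) + dist (zA j) (g.map (g.proj p)) = dist p (g.map (g.proj p)) := by
      rw [hfoldp, hxa, hya]
      field_simp
      ring
    have hproj : g.proj (zA j) = g.proj p := between_proj g p (zA j) hbtw
    constructor
    · show g.proj (zA j) ∈ Icc (W.r - 1/2) (W.r + 1/2)
      rw [hproj]; exact hupI
    · rw [hxa]
      have hjle : (j:ℝ) ≤ 2 ^ n₁ := by exact_mod_cast Nat.cast_le.mpr hj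
      have h5 : (j:ℝ) * dist p P / 2 ^ n₁ ≤ dist p P := by
        rw [div_le_iff₀ (by positivity)]
        nlinarith [dist_nonneg (x := p) (y := P)]
      rw [hB]
      have : dist p P = dp' := rfl
      linarith
  have hsA : ∀ j < 2 ^ n₁, dist (zA j) (zA (j+1)) ≤ δ := by
    intro j hj
    rw [hstepA' j hj]
    exact hstepA
  -- Segment B : along the pole from P to Q'
  set N₂ := Nat.ceil (1/δ) + 1 with hN₂'
  have hN₂pos : 0 < N₂ := by positivity
  have hN₂r : (0:ℝ) < N₂ := by exact_mod_cast hN₂pos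
  have hN₂ge : 1/δ ≤ (N₂:ℝ) := by
    calc (1:ℝ)/δ ≤ Nat.ceil (1/δ) := Nat.le_ceil _
      _ ≤ N₂ := by rw [hN₂']; push_cast; linarith
  have hinv : 1 / (N₂:ℝ) ≤ δ := by
    rw [div_le_iff₀ hN₂r]
    calc (1:ℝ) = δ * (1/δ) := by field_simp
      _ ≤ δ * N₂ := mul_le_mul_of_nonneg_left hN₂ge hδ.le
  set u : ℕ → ℝ := fun i => up + i * (uq - up) / N₂ with hu'
  have hu_mem : ∀ i ≤ N₂, u i ∈ Icc (W.r - 1/2) (W.r + 1/2) := by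
    intro i hi
    have hs0 : (0:ℝ) ≤ (i:ℝ)/N₂ := by positivity
    have hs1 : (i:ℝ)/N₂ ≤ 1 := by
      rw [div_le_one hN₂r]
      exact_mod_cast Nat.cast_le.mpr hi
    have hsrel : (i:ℝ) * (uq - up) / N₂ = ((i:ℝ)/N₂) * (uq - up) := by ring
    constructor
    · show W.r - 1/2 ≤ up + i * (uq - up) / N₂
      rw [hsrel]
      nlinarith [mul_nonneg hs0 (sub_nonneg.2 huqI.1),
        mul_nonneg (sub_nonneg.2 hs1) (sub_nonneg.2 hupI.1)]
    · show up + i * (uq - up) / N₂ ≤ W.r + 1/2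
      rw [hsrel]
      nlinarith [mul_nonneg hs0 (sub_nonneg.2 huqI.2),
        mul_nonneg (sub_nonneg.2 hs1) (sub_nonneg.2 hupI.2)]
  have hu_I : ∀ i ≤ N₂, u i ∈ g.I := fun i hi =>
    interior_subset (W.pole_in_interior (hu_mem i hi))
  set wB : ℕ → Y := fun i => g.map (u i) with hwB'
  have hu0 : u 0 = up := by simp [hu']
  have huN : u N₂ = uq := by
    rw [hu']
    field_simp
    ring
  have hQB : ∀ i ≤ N₂, Qpred (wB i) := by
    intro i hi
    have hui := hu_mem i hi
    have huiI := hu_I i hi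
    constructor
    · show g.proj (g.map (u i)) ∈ Icc (W.r - 1/2) (W.r + 1/2)
      rw [proj_map g huiI]
      exact hui
    · have h1 : dist p (wB i) ≤ dist p P + dist P (wB i) := dist_triangle _ _ _
      have h2 : dist P (wB i) = |up - u i| := by
        show dist (g.map up) (g.map (u i)) = _
        exact g.isom up (g.proj_mem p) (u i) huiI
      have h3 : |up - u i| ≤ 1 := abs_sub_le_one_of_mem_Icc hupI hui
      rw [hB]
      rw [h2] at h1
      linarith
  have hsB : ∀ i < N₂, dist (wB i) (wB (i+1)) ≤ δ := by
    intro i hi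
    have h2 : dist (wB i) (wB (i+1)) = |u i - u (i+1)| :=
      g.isom (u i) (hu_I i hi.le) (u (i+1)) (hu_I (i+1) hi)
    have h3 : u i - u (i+1) = -((uq - up) / N₂) := by
      rw [hu']
      push_cast
      ring
    rw [h2, h3, abs_neg, abs_div, abs_of_pos hN₂r]
    calc |uq - up| / (N₂:ℝ) ≤ 1 / N₂ := by gcongr
      _ ≤ δ := hinv
  -- Segment C : midchain from Q' to q
  obtain ⟨n₃, hn₃⟩ := pow_unbounded_of_one_lt (dist Q' q / δ) (one_lt_two (α := ℝ))
  have hstepC : dist Q' q / 2 ^ n₃ ≤ δ := by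
    rw [div_le_iff₀ (by positivity)]
    rw [div_lt_iff₀ hδ] at hn₃
    nlinarith [dist_nonneg (x := Q') (y := q)]
  obtain ⟨zC, hzC0, hzCN, hdistC, hstepC'⟩ := midchain Q' q n₃
  have h2n₃ : ((2:ℝ) ^ n₃) ≠ 0 := by positivity
  have hdqq : dist Q' q = dq' := dist_comm Q' q
  have hfoldq : g.map (g.proj q) = Q' := by rw [hQ'', huq']
  have hpQ' : dist p Q' ≤ dp' + 1 := by
    have h1 : dist p Q' ≤ dist p P + dist P Q' := dist_triangle _ _ _
    have h2 : dist P Q' = |up - uq| := g.isom up (g.proj_mem p) uq (g.proj_mem q)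
    have h3 : |up - uq| ≤ 1 := by rw [abs_sub_comm]; exact habs
    have h4 : dist p P = dp' := rfl
    linarith
  have hQC : ∀ j ≤ 2 ^ n₃, Qpred (zC j) := by
    intro j hj
    obtain ⟨hxa, hya⟩ := hdistC j hj
    have hbtw : dist q (zC j) + dist (zC j) (g.map (g.proj q)) = dist q (g.map (g.proj q)) := by
      rw [hfoldq, dist_comm q (zC j), hya, dist_comm (zC j) Q', hxa, dist_comm q Q']
      field_simp
      ring
    have hproj : g.proj (zC j) = g.proj q := between_proj g q (zC j) hbtw
    constructor
    · show g.proj (zC j) ∈ Icc (W.r - 1/2) (W.r + 1/2)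
      rw [hproj]; exact huqI
    · have h1 : dist p (zC j) ≤ dist p Q' + dist Q' (zC j) := dist_triangle _ _ _
      have hjle : (j:ℝ) ≤ 2 ^ n₃ := by exact_mod_cast Nat.cast_le.mpr hj
      have h2 : dist Q' (zC j) ≤ dist Q' q := by
        rw [hxa]
        rw [div_le_iff₀ (by positivity)]
        nlinarith [dist_nonneg (x := Q') (y := q)]
      rw [hB]
      rw [hdqq] at h2
      linarith
  have hsC : ∀ j < 2 ^ n₃, dist (zC j) (zC (j+1)) ≤ δ := by
    intro j hj
    rw [hstepC' j hj]
    exact hstepC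
  -- concatenate
  have hjoin1 : zA (2 ^ n₁) = wB 0 := by
    rw [hzAN]
    show P = g.map (u 0)
    rw [hu0, hP']
  obtain ⟨w1, hw10, hw1N, hw1s, hw1Q⟩ :=
    concat_path Qpred δ (2 ^ n₁) N₂ zA wB hjoin1 hsA hsB hQA hQB
  have hjoin2 : w1 (2 ^ n₁ + N₂) = zC 0 := by
    rw [hw1N]
    show g.map (u N₂) = zC 0
    rw [huN, hzC0, hQ'']
  obtain ⟨w, hw0, hwN, hws, hwQ⟩ :=
    concat_path Qpred δ (2 ^ n₁ + N₂) (2 ^ n₃) w1 zC hjoin2 hw1s hsC hw1Q hQC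
  refine ⟨2 ^ n₁ + N₂ + 2 ^ n₃, w, ?_, ?_, hws, hwQ⟩
  · rw [hw0, hw10, hzA0]
  · rw [hwN, hzCN]

set_option maxHeartbeats 1000000 in
/-- If a curtain `W` contains points projecting strictly below and strictly
above the pole of a curtain `c`, then `c` meets `W`. -/
theorem meets_of_crossing [CAT0 Y] (c W : Curtain Y) (p q : Y)
    (hp : p ∈ W.carrier) (hq : q ∈ W.carrier)
    (hlo : c.geo.proj p < c.r - 1/2) (hhi : c.r + 1/2 < c.geo.proj q) : Meets c W := by
  by_contra hno
  rw [Meets, Set.not_nonempty_iff_eq_empty] at hno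
  have hnotin : ∀ x : Y, x ∈ W.carrier → x ∉ c.carrier := by
    intro x hxW hxc
    have hmem : x ∈ c.carrier ∩ W.carrier := ⟨hxc, hxW⟩
    rw [hno] at hmem
    exact hmem
  obtain ⟨M0, hM0⟩ : ∃ M0 : ℝ, M0 = dist p (W.geo.map (W.geo.proj p)) +
      dist q (W.geo.map (W.geo.proj q)) + 1 + dist p (c.geo.map (c.geo.proj p)) := ⟨_, rfl⟩
  have hM00 : 0 ≤ M0 := by
    rw [hM0]
    positivity
  obtain ⟨δ, hδ⟩ : ∃ δ : ℝ, δ = 1 / (8 * (M0 + 1)) := ⟨_, rfl⟩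
  have hδ0 : 0 < δ := by
    rw [hδ]; positivity
  have hδ1 : δ ≤ 1 := by
    rw [hδ, div_le_one (by positivity)]
    linarith
  obtain ⟨N, w, hw0, hwN, hws, hwQ⟩ := exists_discrete_path W p q hp hq δ hδ0
  have hb : ∀ j ≤ N, dist (w j) (c.geo.map (c.geo.proj (w j))) ≤ M0 := by
    intro j hj
    have h1 : dist (w j) (c.geo.map (c.geo.proj (w j))) ≤ dist (w j) (c.geo.map (c.geo.proj p)) :=
      c.geo.proj_min (w j) _ (c.geo.proj_mem p)
    have h2 : dist (w j) (c.geo.map (c.geo.proj p)) ≤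
        dist (w j) p + dist p (c.geo.map (c.geo.proj p)) := dist_triangle _ _ _
    have h3 : dist (w j) p = dist p (w j) := dist_comm _ _
    have h4 := (hwQ j hj).2
    rw [hM0]
    linarith
  have hstep : ∀ j < N, c.geo.proj (w (j+1)) ≤ c.geo.proj (w j) + 1 := by
    intro j hj
    have hmod := proj_modulus c.geo (w (j+1)) (w j)
    obtain ⟨D, hD⟩ : ∃ D, D = dist (w (j+1)) (w j) := ⟨_, rfl⟩
    have hD0 : 0 ≤ D := hD ▸ dist_nonneg
    have hDδ : D ≤ δ := by
      rw [hD, dist_comm]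
      exact hws j hj
    obtain ⟨b, hb'⟩ : ∃ b, b = dist (w j) (c.geo.map (c.geo.proj (w j))) := ⟨_, rfl⟩
    have hbM : b ≤ M0 := hb' ▸ hb j hj.le
    have hb0 : 0 ≤ b := hb' ▸ dist_nonneg
    rw [← hD, ← hb'] at hmod
    have h8 : 8 * D * (b + D) ≤ 8 * δ * (M0 + 1) := by
      have hprod : D * (b + D) ≤ δ * (M0 + 1) := by
        have h5 : b + D ≤ M0 + 1 := by linarith
        have h6 : D * (b + D) ≤ δ * (b + D) := by
          apply mul_le_mul_of_nonneg_right hDδ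
          linarith
        have h7 : δ * (b + D) ≤ δ * (M0 + 1) := by
          apply mul_le_mul_of_nonneg_left h5 hδ0.le
        linarith
      linarith
    have heq : 8 * δ * (M0 + 1) = 1 := by
      rw [hδ]
      field_simp
    have hsq : (c.geo.proj (w (j+1)) - c.geo.proj (w j))^2 ≤ 1 := by linarith
    nlinarith [hsq]
  have hkey : ∀ j, j ≤ N → c.geo.proj (w j) < c.r - 1/2 := by
    intro j
    induction j with
    | zero =>
      intro _
      rw [hw0]
      exact hlo
    | succ i ih =>
      intro hiN
      have h1 := ih (by omega)
      have h2 := hstep i (by omega)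
      have hwin : w (i+1) ∈ W.carrier := (hwQ (i+1) hiN).1
      have hnot : c.geo.proj (w (i+1)) ∉ Icc (c.r - 1/2) (c.r + 1/2) := hnotin _ hwin
      rw [Set.mem_Icc, not_and_or, not_le, not_le] at hnot
      rcases hnot with hlt | hgt
      · exact hlt
      · linarith
  have hfin := hkey N le_rfl
  rw [hwN] at hfin
  linarith

/-- Existence of a closest point on a compact geodesic segment. -/
theorem exists_min_on_seg (γ : ℝ → Y) (I : Set ℝ) (hgeo : IsGeodesicOn γ I)
    (a b : ℝ) (hab : a ≤ b) (hsub : Icc a b ⊆ I) (x : Y) :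
    ∃ t ∈ Icc a b, ∀ s ∈ Icc a b, dist x (γ t) ≤ dist x (γ s) := by
  have hlip : LipschitzOnWith 1 γ (Icc a b) := by
    apply LipschitzOnWith.of_dist_le_mul
    intro s hs t ht
    rw [hgeo s (hsub hs) t (hsub ht), Real.dist_eq]
    simp
  have hcont : ContinuousOn (fun t => dist x (γ t)) (Icc a b) :=
    (continuous_const.dist continuous_id).comp_continuousOn hlip.continuousOn
  obtain ⟨t, ht, hmin⟩ :=
    isCompact_Icc.exists_isMinOn (Set.nonempty_Icc.mpr hab) hcont
  exact ⟨t, ht, fun s hs => hmin hs⟩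

/-- The restriction of a geodesic to a compact subsegment, with a chosen
closest-point projection. -/
noncomputable def subGeo (γ : ℝ → Y) (I : Set ℝ) (hgeo : IsGeodesicOn γ I)
    (a b : ℝ) (hab : a ≤ b) (hsub : Icc a b ⊆ I) : Geodesic Y where
  I := Icc a b
  ordConn := ordConnected_Icc
  map := γ
  isom := fun s hs t ht => hgeo s (hsub hs) t (hsub ht)
  proj := fun x => (exists_min_on_seg γ I hgeo a b hab hsub x).choose
  proj_mem := fun x => (exists_min_on_seg γ I hgeo a b hab hsub x).choose_spec.1
  proj_min := fun x t ht => (exists_min_on_seg γ I hgeo a b hab hsub x).choose_spec.2 t ht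

theorem subGeo_proj_le [CAT0 Y] (γ : ℝ → Y) (I : Set ℝ) (hgeo : IsGeodesicOn γ I)
    (a b : ℝ) (hab : a ≤ b) (hsub : Icc a b ⊆ I) (s : ℝ) (hs : s ∈ I) (hsa : s ≤ a) :
    (subGeo γ I hgeo a b hab hsub).proj (γ s) = a := by
  set G := subGeo γ I hgeo a b hab hsub with hG
  have haI : a ∈ Icc a b := ⟨le_refl a, hab⟩
  refine proj_unique G (γ s) (G.proj_mem (γ s)) haI (G.proj_min (γ s)) ?_
  intro t ht
  show dist (γ s) (γ a) ≤ dist (γ s) (γ t)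
  rw [hgeo s hs a (hsub haI), hgeo s hs t (hsub ht)]
  rw [abs_of_nonpos (by linarith), abs_of_nonpos (by rcases ht with ⟨h1, h2⟩; linarith)]
  rcases ht with ⟨h1, h2⟩
  linarith

theorem subGeo_proj_ge [CAT0 Y] (γ : ℝ → Y) (I : Set ℝ) (hgeo : IsGeodesicOn γ I)
    (a b : ℝ) (hab : a ≤ b) (hsub : Icc a b ⊆ I) (s : ℝ) (hs : s ∈ I) (hsb : b ≤ s) :
    (subGeo γ I hgeo a b hab hsub).proj (γ s) = b := by
  set G := subGeo γ I hgeo a b hab hsub with hG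
  have hbI : b ∈ Icc a b := ⟨hab, le_refl b⟩
  refine proj_unique G (γ s) (G.proj_mem (γ s)) hbI (G.proj_min (γ s)) ?_
  intro t ht
  show dist (γ s) (γ b) ≤ dist (γ s) (γ t)
  rw [hgeo s hs b (hsub hbI), hgeo s hs t (hsub ht)]
  rw [abs_of_nonneg (by linarith), abs_of_nonneg (by rcases ht with ⟨h1, h2⟩; linarith)]
  rcases ht with ⟨h1, h2⟩
  linarith

set_option maxHeartbeats 1000000 in
/-- Core argument for statement 11. -/
theorem core_bigon [CAT0 Y] (L : ℕ) (h k : Curtain Y) (hsep : LSeparated (L : ℕ∞) h k)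
    (γ : ℝ → Y) (I : Set ℝ) (hI : I.OrdConnected) (hgeo : IsGeodesicOn γ I)
    (t₂ t₃ : ℝ) (h2 : t₂ ∈ I) (h3 : t₃ ∈ I) (hlt : t₂ < t₃)
    (a b a' b' : ℝ) (haI : a ∈ I) (hbI : b ∈ I) (haI' : a' ∈ I) (hbI' : b' ∈ I)
    (haa : a ≤ t₂) (hbb : t₃ ≤ b) (haa' : a' ≤ t₂) (hbb' : t₃ ≤ b')
    (hha : γ a ∈ h.carrier) (hhb : γ b ∈ h.carrier)
    (hka : γ a' ∈ k.carrier) (hkb : γ b' ∈ k.carrier) :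
    t₃ - t₂ ≤ (L : ℝ) + 1 := by
  by_contra hgt
  push_neg at hgt
  obtain ⟨d, hd⟩ : ∃ d, d = t₃ - t₂ := ⟨_, rfl⟩
  set n := L + 1 with hn
  have hnr : ((n:ℝ)) = (L:ℝ) + 1 := by rw [hn]; push_cast; ring
  have hdn' : (n:ℝ) < d := by rw [hd, hnr]; linarith
  obtain ⟨ε, hε⟩ : ∃ ε, ε = (d - n)/(n+1) := ⟨_, rfl⟩
  have hε0 : 0 < ε := by
    rw [hε]
    apply div_pos (by linarith) (by positivity)
  have hdn : (n:ℝ) + ((n:ℝ)+1)*ε = d := by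
    rw [hε]
    field_simp
    ring
  have hsub : Icc t₂ t₃ ⊆ I := hI.out h2 h3
  set G := subGeo γ I hgeo t₂ t₃ hlt.le hsub with hG
  have hpolebound : ∀ i : Fin n,
      t₂ < t₂ + (((i:ℕ):ℝ)+1)*ε + ((i:ℕ):ℝ) ∧
      t₂ + (((i:ℕ):ℝ)+1)*ε + ((i:ℕ):ℝ) + 1 < t₃ := by
    intro i
    have hi0 : (0:ℝ) ≤ ((i:ℕ):ℝ) := by positivity
    have hilt : ((i:ℕ):ℝ) ≤ (n:ℝ) - 1 := by
      have := i.isLt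
      have : ((i:ℕ):ℝ) + 1 ≤ (n:ℝ) := by exact_mod_cast this
      linarith
    constructor
    · nlinarith
    · have h5 : (((i:ℕ):ℝ)+1)*ε + ((i:ℕ):ℝ) + 1 ≤ (n:ℝ)*ε + (n:ℝ) := by nlinarith
      have h6 : (n:ℝ)*ε + (n:ℝ) < d := by nlinarith
      rw [hd] at h6
      linarith
  set c : Fin n → Curtain Y := fun i =>
    { geo := G
      r := t₂ + (((i:ℕ):ℝ)+1)*ε + ((i:ℕ):ℝ) + 1/2
      pole_in_interior := by
        show Icc _ _ ⊆ interior (Icc t₂ t₃)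
        rw [interior_Icc]
        intro x hx
        obtain ⟨hx1, hx2⟩ := hx
        obtain ⟨hp1, hp2⟩ := hpolebound i
        constructor
        · calc t₂ < t₂ + (((i:ℕ):ℝ)+1)*ε + ((i:ℕ):ℝ) := hp1
            _ = t₂ + (((i:ℕ):ℝ)+1)*ε + ((i:ℕ):ℝ) + 1/2 - 1/2 := by ring
            _ ≤ x := hx1
        · calc x ≤ t₂ + (((i:ℕ):ℝ)+1)*ε + ((i:ℕ):ℝ) + 1/2 + 1/2 := hx2
            _ = t₂ + (((i:ℕ):ℝ)+1)*ε + ((i:ℕ):ℝ) + 1 := by ring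
            _ < t₃ := hp2 } with hc
  have hcar : ∀ (i : Fin n) (x : Y), x ∈ (c i).carrier →
      t₂ + (((i:ℕ):ℝ)+1)*ε + ((i:ℕ):ℝ) ≤ G.proj x ∧
      G.proj x ≤ t₂ + (((i:ℕ):ℝ)+1)*ε + ((i:ℕ):ℝ) + 1 := by
    intro i x hx
    have hx' : G.proj x ∈ Icc ((c i).r - 1/2) ((c i).r + 1/2) := hx
    obtain ⟨hx1, hx2⟩ := hx'
    have e1 : (c i).r - 1/2 = t₂ + (((i:ℕ):ℝ)+1)*ε + ((i:ℕ):ℝ) := by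
      show (t₂ + (((i:ℕ):ℝ)+1)*ε + ((i:ℕ):ℝ) + 1/2) - 1/2 = _
      ring
    have e2 : (c i).r + 1/2 = t₂ + (((i:ℕ):ℝ)+1)*ε + ((i:ℕ):ℝ) + 1 := by
      show (t₂ + (((i:ℕ):ℝ)+1)*ε + ((i:ℕ):ℝ) + 1/2) + 1/2 = _
      ring
    rw [e1] at hx1
    rw [e2] at hx2
    exact ⟨hx1, hx2⟩
  have hchain : IsChainSeq c := by
    constructor
    · have key : ∀ i j : Fin n, i < j → Disjoint (c i).carrier (c j).carrier := by
        intro i j hij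
        rw [Set.disjoint_left]
        intro x hxi hxj
        obtain ⟨_, hi2⟩ := hcar i x hxi
        obtain ⟨hj1, _⟩ := hcar j x hxj
        have hij' : ((i:ℕ):ℝ) + 1 ≤ ((j:ℕ):ℝ) := by exact_mod_cast hij
        nlinarith
      intro i j hij
      rcases lt_or_gt_of_ne hij with hlt' | hlt'
      · exact key i j hlt'
      · exact (key j i hlt').symm
    · intro i j kk hij hjk
      refine Or.inl ⟨?_, ?_⟩
      · intro x hx
        obtain ⟨_, hi2⟩ := hcar i x hx
        show G.proj x < (c j).r - 1/2
        have e1 : (c j).r - 1/2 = t₂ + (((j:ℕ):ℝ)+1)*ε + ((j:ℕ):ℝ) := by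
          show (t₂ + (((j:ℕ):ℝ)+1)*ε + ((j:ℕ):ℝ) + 1/2) - 1/2 = _
          ring
        rw [e1]
        have hj : ((j:ℕ):ℝ) = ((i:ℕ):ℝ) + 1 := by exact_mod_cast hij.symm
        rw [hj]
        nlinarith
      · intro x hx
        obtain ⟨hk1, _⟩ := hcar kk x hx
        show (c j).r + 1/2 < G.proj x
        have e2 : (c j).r + 1/2 = t₂ + (((j:ℕ):ℝ)+1)*ε + ((j:ℕ):ℝ) + 1 := by
          show (t₂ + (((j:ℕ):ℝ)+1)*ε + ((j:ℕ):ℝ) + 1/2) + 1/2 = _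
          ring
        rw [e2]
        have hk' : ((kk:ℕ):ℝ) = ((j:ℕ):ℝ) + 1 := by exact_mod_cast hjk.symm
        rw [hk'] at hk1
        nlinarith
  have hproja : G.proj (γ a) = t₂ := subGeo_proj_le γ I hgeo t₂ t₃ hlt.le hsub a haI haa
  have hprojb : G.proj (γ b) = t₃ := subGeo_proj_ge γ I hgeo t₂ t₃ hlt.le hsub b hbI hbb
  have hproja' : G.proj (γ a') = t₂ := subGeo_proj_le γ I hgeo t₂ t₃ hlt.le hsub a' haI' haa'
  have hprojb' : G.proj (γ b') = t₃ := subGeo_proj_ge γ I hgeo t₂ t₃ hlt.le hsub b' hbI' hbb'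
  have hmeets : ∀ i : Fin n, Meets (c i) h ∧ Meets (c i) k := by
    intro i
    obtain ⟨hp1, hp2⟩ := hpolebound i
    have e1 : (c i).r - 1/2 = t₂ + (((i:ℕ):ℝ)+1)*ε + ((i:ℕ):ℝ) := by
      show (t₂ + (((i:ℕ):ℝ)+1)*ε + ((i:ℕ):ℝ) + 1/2) - 1/2 = _
      ring
    have e2 : (c i).r + 1/2 = t₂ + (((i:ℕ):ℝ)+1)*ε + ((i:ℕ):ℝ) + 1 := by
      show (t₂ + (((i:ℕ):ℝ)+1)*ε + ((i:ℕ):ℝ) + 1/2) + 1/2 = _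
      ring
    constructor
    · refine meets_of_crossing (c i) h (γ a) (γ b) hha hhb ?_ ?_
      · show G.proj (γ a) < (c i).r - 1/2
        rw [hproja, e1]
        exact hp1
      · show (c i).r + 1/2 < G.proj (γ b)
        rw [hprojb, e2]
        exact hp2
    · refine meets_of_crossing (c i) k (γ a') (γ b') hka hkb ?_ ?_
      · show G.proj (γ a') < (c i).r - 1/2
        rw [hproja', e1]
        exact hp1
      · show (c i).r + 1/2 < G.proj (γ b')
        rw [hprojb', e2]
        exact hp2
  have hle := hsep.2 n c hchain hmeets
  have hle' : n ≤ L := by exact_mod_cast hle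
  omega

end Aux

/-- no bigons across `L`-separated curtains. -/
theorem stmt11 {X : Type*} [MetricSpace X] [CAT0 X] (L : ℕ)
    (h k : Curtain X) (hsep : LSeparated (L : ℕ∞) h k)
    (γ : ℝ → X) (I : Set ℝ) (hI : I.OrdConnected) (hgeo : IsGeodesicOn γ I)
    (t₁ t₂ t₃ t₄ : ℝ) (h1 : t₁ ∈ I) (h2 : t₂ ∈ I) (h3 : t₃ ∈ I) (h4 : t₄ ∈ I)
    (o12 : t₁ < t₂) (o23 : t₂ < t₃) (o34 : t₃ < t₄)
    (hmem : (γ t₁ ∈ h.carrier ∧ γ t₂ ∈ k.carrier ∧ γ t₃ ∈ k.carrier ∧ γ t₄ ∈ h.carrier) ∨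
            (γ t₁ ∈ h.carrier ∧ γ t₂ ∈ k.carrier ∧ γ t₃ ∈ h.carrier ∧ γ t₄ ∈ k.carrier)) :
    t₃ - t₂ ≤ (L : ℝ) + 1 := by
  rcases hmem with ⟨hm1, hm2, hm3, hm4⟩ | ⟨hm1, hm2, hm3, hm4⟩
  · exact core_bigon L h k hsep γ I hI hgeo t₂ t₃ h2 h3 o23 t₁ t₄ t₂ t₃ h1 h4 h2 h3
      o12.le (o34.le) le_rfl le_rfl hm1 hm4 hm2 hm3
  · exact core_bigon L h k hsep γ I hI hgeo t₂ t₃ h2 h3 o23 t₁ t₃ t₂ t₄ h1 h3 h2 h4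
      o12.le le_rfl le_rfl o34.le hm1 hm3 hm2 hm4


end Curtains
end

section
/- Let α be a CAT(0) geodesic and t₁ < t₂ < t₃. Any L-chain c separating α(t₂) from the set {α(t₁), α(t₃)} has cardinality at most L' = 1 + ⌊L/2⌋. -/
open Metric Set

namespace Curtains

variable {X : Type*} [MetricSpace X]

/-!
Restrict `γ` to `[t₁, t₃]`. The closest-point projection of a CAT(0) space onto a geodesic is
`1`-Lipschitz, so every curtain `c i` is crossed by `γ` on a whole unit interval before `t₂` and on
another one after `t₂`. Order the curtains by their last visit before `t₂`: since a curtain is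
connected and disjoint from the others, it lies in a single halfspace of each of them, and this
forces the earliest curtain `c a` to enclose all others along `γ`, and the second earliest `c b` all
but `c a`. The `2 (n - 1)` crossing intervals of the curtains other than `c a` are the poles of a
chain of curtains dual to `γ`, each meeting both `c a` and `c b`; as `c a` and `c b` are
`L`-separated, `2 (n - 1) ≤ L`.
-/

section Elementary

lemma exists_unit_Icc_abs_le_half {f : ℝ → ℝ} {a b : ℝ} (hab : a ≤ b)
    (hf : LipschitzOnWith 1 f (Icc a b))
    (hsign : 1 / 2 < f a ∧ f b < -(1 / 2) ∨ f a < -(1 / 2) ∧ 1 / 2 < f b) :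
    ∃ m, a < m - 1 / 2 ∧ m + 1 / 2 < b ∧ ∀ s ∈ Icc (m - 1 / 2) (m + 1 / 2), |f s| ≤ 1 / 2 := by
  wlog hdesc : 1 / 2 < f a ∧ f b < -(1 / 2) generalizing f
  · have hneg : LipschitzOnWith 1 (-f) (Icc a b) := LipschitzOnWith.mk_one fun s hs t ht => by
      simpa [dist_neg_neg] using hf.dist_le_mul s hs t ht
    have hasc : f a < -(1 / 2) ∧ 1 / 2 < f b := hsign.resolve_left hdesc
    have hdesc' : 1 / 2 < (-f) a ∧ (-f) b < -(1 / 2) := by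
      simp only [Pi.neg_apply]
      constructor <;> linarith [hasc.1, hasc.2]
    obtain ⟨m, ham, hmb, hm⟩ := this hneg (.inl hdesc') hdesc'
    exact ⟨m, ham, hmb, fun s hs => by simpa using hm s hs⟩
  obtain ⟨hfa, hfb⟩ := hdesc
  have hlip : ∀ s ∈ Icc a b, ∀ t ∈ Icc a b, |f s - f t| ≤ |s - t| := fun s hs t ht => by
    simpa [Real.dist_eq] using hf.dist_le_mul s hs t ht
  -- `σ` is the last time with `f σ ≥ 1/2`; on `[σ, σ + 1]` the Lipschitz bound keeps `f ≥ -1/2`.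
  set T := Icc a b ∩ f ⁻¹' Ici (1 / 2)
  have hTbdd : BddAbove T := ⟨b, fun s hs => hs.1.2⟩
  have hσT : sSup T ∈ T := (hf.continuousOn.preimage_isClosed_of_isClosed isClosed_Icc
    isClosed_Ici).csSup_mem ⟨a, ⟨le_rfl, hab⟩, hfa.le⟩ hTbdd
  set σ := sSup T
  obtain ⟨⟨haσ, hσb⟩, hfσ⟩ := hσT
  have hfσ_eq : f σ = 1 / 2 := by
    obtain ⟨v, hv, hfv⟩ := intermediate_value_Icc' hσb
      (hf.continuousOn.mono (Icc_subset_Icc haσ le_rfl)) ⟨hfb.le.trans (by norm_num), hfσ⟩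
    have : v ≤ σ := le_csSup hTbdd ⟨⟨haσ.trans hv.1, hv.2⟩, hfv.ge⟩
    rwa [le_antisymm this hv.1] at hfv
  have hσb' : σ + 1 < b := by
    have := hlip b ⟨hab, le_rfl⟩ σ ⟨haσ, hσb⟩
    rw [abs_of_nonneg (by linarith : (0 : ℝ) ≤ b - σ), abs_le] at this
    linarith
  have haσ' : a < σ := lt_of_le_of_ne haσ fun h => by rw [← h] at hfσ_eq; linarith
  refine ⟨σ + 1 / 2, by linarith, by linarith, fun s hs => ?_⟩
  have hsσ : σ ≤ s := by linarith [hs.1]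
  have hsab : s ∈ Icc a b := ⟨by linarith, by linarith [hs.2]⟩
  have hlow := hlip s hsab σ ⟨haσ, hσb⟩
  rw [abs_of_nonneg (sub_nonneg.2 hsσ), abs_le] at hlow
  have hup : f s ≤ 1 / 2 := by
    rcases hsσ.eq_or_lt with rfl | hσs
    · exact hfσ_eq.le
    · by_contra hfs
      exact (le_csSup hTbdd ⟨hsab, (not_le.1 hfs).le⟩).not_gt hσs
  rw [abs_le]
  constructor <;> linarith [hs.2]

lemma add_one_lt_of_disjoint_Icc {m m' : ℝ}
    (hd : Disjoint (Icc (m - 1 / 2) (m + 1 / 2)) (Icc (m' - 1 / 2) (m' + 1 / 2))) (hmm' : m ≤ m') :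
    m + 1 < m' := by
  by_contra hle
  exact disjoint_left.1 hd (⟨by linarith, by linarith⟩ : m' - 1 / 2 ∈ Icc (m - 1 / 2) (m + 1 / 2))
    ⟨le_rfl, by linarith⟩

lemma exists_two_least_of_injective {ι α : Type*} [Fintype ι] [LinearOrder α] {f : ι → α}
    (hf : Function.Injective f) (hcard : 2 ≤ Fintype.card ι) :
    ∃ a b, a ≠ b ∧ (∀ i, i ≠ a → f a < f i) ∧ ∀ i, i ≠ a → i ≠ b → f b < f i := by
  classical
  have : Nonempty ι := Fintype.card_pos_iff.1 (by omega)
  obtain ⟨a, -, ha⟩ := Finset.univ.exists_min_image f Finset.univ_nonempty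
  obtain ⟨b, hb, hbmin⟩ := (Finset.univ.erase a).exists_min_image f (by
    rw [← Finset.card_pos, Finset.card_erase_of_mem (Finset.mem_univ a), Finset.card_univ]
    omega)
  exact ⟨a, b, (Finset.ne_of_mem_erase hb).symm,
    fun i hi => (ha i (Finset.mem_univ i)).lt_of_ne (hf.ne hi.symm),
    fun i hia hib => (hbmin i (Finset.mem_erase.2 ⟨hia, Finset.mem_univ i⟩)).lt_of_ne
      (hf.ne hib.symm)⟩

end Elementary

section Geodesics

lemma IsGeodesicOn.lipschitzOnWith {γ : ℝ → X} {I : Set ℝ} (hγ : IsGeodesicOn γ I) :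
    LipschitzOnWith 1 γ I :=
  LipschitzOnWith.mk_one fun s hs t ht => (hγ s hs t ht).le

lemma IsGeodesicOn.mono {γ : ℝ → X} {I J : Set ℝ} (hγ : IsGeodesicOn γ I) (hJI : J ⊆ I) :
    IsGeodesicOn γ J :=
  fun s hs t ht => hγ s (hJI hs) t (hJI ht)

lemma exists_geodesic_map_eq {γ : ℝ → X} {a b : ℝ} (hab : a ≤ b)
    (hγ : IsGeodesicOn γ (Icc a b)) : ∃ g : Geodesic X, g.I = Icc a b ∧ g.map = γ := by
  have hmin : ∀ x : X, ∃ t ∈ Icc a b, IsMinOn (fun s => dist x (γ s)) (Icc a b) t := fun x =>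
    isCompact_Icc.exists_isMinOn (nonempty_Icc.2 hab)
      ((continuous_const.dist continuous_id).comp_continuousOn hγ.lipschitzOnWith.continuousOn)
  choose p hp hpmin using hmin
  exact ⟨⟨Icc a b, ordConnected_Icc, γ, hγ, p, hp, fun x _ ht => hpmin x ht⟩, rfl, rfl⟩

lemma Geodesic.add_div_two_mem (g : Geodesic X) {u v : ℝ} (hu : u ∈ g.I) (hv : v ∈ g.I) :
    (u + v) / 2 ∈ g.I := by
  refine g.ordConn.uIcc_subset hu hv ?_
  rcases le_total u v with huv | hvu
  · exact mem_uIcc_of_le (by linarith) (by linarith)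
  · exact mem_uIcc_of_ge (by linarith) (by linarith)

end Geodesics

section Halfspaces

namespace Curtain

variable (h : Curtain X) {x y z : X}

def height (x : X) : ℝ := h.geo.proj x - h.r

lemma mem_carrier_iff : x ∈ h.carrier ↔ |h.height x| ≤ 1 / 2 := by
  simp only [carrier, height, mem_ofPred_eq, mem_Icc, abs_le]
  constructor <;> rintro ⟨h₁, h₂⟩ <;> constructor <;> linarith

lemma mem_minus_iff : x ∈ h.minus ↔ h.height x < -(1 / 2) := by
  simp only [minus, height, mem_ofPred_eq]
  constructor <;> intro <;> linarith

lemma mem_plus_iff : x ∈ h.plus ↔ 1 / 2 < h.height x := by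
  simp only [plus, height, mem_ofPred_eq]
  constructor <;> intro <;> linarith

def SameSide (x y : X) : Prop :=
  (x ∈ h.minus ∧ y ∈ h.minus) ∨ (x ∈ h.plus ∧ y ∈ h.plus)

lemma separatesPts_iff :
    h.SeparatesPts x y ↔ (x ∈ h.minus ∧ y ∈ h.plus) ∨ (x ∈ h.plus ∧ y ∈ h.minus) := by
  simp [SeparatesPts, SeparatesSets]

lemma SeparatesSets.mono {h : Curtain X} {A B A' B' : Set X} (hsep : h.SeparatesSets A B)
    (hA : A' ⊆ A) (hB : B' ⊆ B) : h.SeparatesSets A' B' :=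
  hsep.imp (fun ⟨h₁, h₂⟩ => ⟨hA.trans h₁, hB.trans h₂⟩) fun ⟨h₁, h₂⟩ => ⟨hA.trans h₁, hB.trans h₂⟩

lemma SeparatesSets.symm {h : Curtain X} {A B : Set X} (hsep : h.SeparatesSets A B) :
    h.SeparatesSets B A :=
  (Or.symm hsep).imp And.symm And.symm

lemma SeparatesPts.symm {h : Curtain X} (hsep : h.SeparatesPts x y) : h.SeparatesPts y x :=
  SeparatesSets.symm hsep

lemma SeparatesPts.notMem_carrier {h : Curtain X} (hsep : h.SeparatesPts x y) :
    x ∉ h.carrier ∧ y ∉ h.carrier := by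
  simp only [separatesPts_iff, mem_minus_iff, mem_plus_iff, mem_carrier_iff, abs_le] at hsep ⊢
  constructor <;> rintro ⟨_, _⟩ <;> rcases hsep with ⟨_, _⟩ | ⟨_, _⟩ <;> linarith

lemma sameSide_or_separatesPts (hx : x ∉ h.carrier) (hy : y ∉ h.carrier) :
    h.SameSide x y ∨ h.SeparatesPts x y := by
  simp only [SameSide, separatesPts_iff, mem_minus_iff, mem_plus_iff, mem_carrier_iff, abs_le,
    not_and_or, not_le] at hx hy ⊢
  rcases hx with hx | hx <;> rcases hy with hy | hy <;> simp_all

lemma SeparatesPts.trans_sameSide {h : Curtain X} (hxy : h.SeparatesPts x y)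
    (hyz : h.SameSide y z) : h.SeparatesPts x z := by
  simp only [SameSide, separatesPts_iff, mem_minus_iff, mem_plus_iff] at hxy hyz ⊢
  rcases hxy with ⟨_, _⟩ | ⟨_, _⟩ <;> rcases hyz with ⟨_, _⟩ | ⟨_, _⟩
  all_goals first | (left; constructor <;> linarith) | (right; constructor <;> linarith)

end Curtain

end Halfspaces

section EpsChains

/-- Without completeness `X` need not contain geodesic segments, so curtains are only shown to be
`ε`-chain connected for every `ε > 0`; this suffices for intermediate value arguments. -/
def JoinedByEpsChain (s : Set X) (ε : ℝ) : X → X → Prop :=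
  Relation.ReflTransGen fun u v => u ∈ s ∧ v ∈ s ∧ dist u v ≤ ε

namespace JoinedByEpsChain

variable {s t : Set X} {ε δ : ℝ} {x y z : X}

lemma mono (hst : s ⊆ t) (hεδ : ε ≤ δ) (h : JoinedByEpsChain s ε x y) :
    JoinedByEpsChain t δ x y :=
  Relation.ReflTransGen.mono (fun _ _ ⟨hu, hv, huv⟩ => ⟨hst hu, hst hv, huv.trans hεδ⟩) _ _ h

lemma trans (hxy : JoinedByEpsChain s ε x y) (hyz : JoinedByEpsChain s ε y z) :
    JoinedByEpsChain s ε x z :=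
  Relation.ReflTransGen.trans hxy hyz

lemma symm (h : JoinedByEpsChain s ε x y) : JoinedByEpsChain s ε y x :=
  Relation.ReflTransGen.mono (fun _ _ ⟨hu, hv, huv⟩ => ⟨hv, hu, by rwa [dist_comm]⟩) _ _
    (Relation.reflTransGen_swap.2 h)

/-- A `1`-Lipschitz function cannot jump over an interval longer than the steps of the chain. -/
lemma exists_mem_Icc {A B : ℝ} (h : JoinedByEpsChain s (B - A) x y) (hAB : A ≤ B)
    {F : X → ℝ} (hF : LipschitzWith 1 F) (hx : F x < A) (hy : B < F y) :
    ∃ u ∈ s, F u ∈ Icc A B := by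
  induction h with
  | refl => linarith
  | @tail v w _ hvw ih =>
    obtain ⟨hv, -, hdist⟩ := hvw
    by_cases hBv : B < F v
    · exact ih hBv
    by_cases hAv : A ≤ F v
    · exact ⟨v, hv, hAv, not_lt.1 hBv⟩
    have hFvw : dist (F v) (F w) ≤ dist v w := by simpa using hF.dist_le_mul v w
    rw [Real.dist_eq, abs_le] at hFvw
    linarith

end JoinedByEpsChain

end EpsChains

section DualChains

lemma exists_isChainSeq_of_poles (g : Geodesic X) (S : Finset ℝ)
    (hS : ∀ m ∈ S, Icc (m - 1 / 2) (m + 1 / 2) ⊆ interior g.I)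
    (hgap : ∀ m ∈ S, ∀ m' ∈ S, m < m' → m + 1 < m') :
    ∃ c : Fin S.card → Curtain X, IsChainSeq c ∧
      ∀ i, ∃ m ∈ S, (c i).carrier = g.proj ⁻¹' Icc (m - 1 / 2) (m + 1 / 2) := by
  let e := S.orderIsoOfFin rfl
  have hlt : ∀ i j, i < j → (e i : ℝ) + 1 < e j := fun i j hij =>
    hgap _ (e i).2 _ (e j).2 (e.strictMono hij)
  refine ⟨fun i => ⟨g, e i, hS _ (e i).2⟩, ⟨fun i j hij => ?_, fun i j k hij hjk => ?_⟩,
    fun i => ⟨e i, (e i).2, rfl⟩⟩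
  · rcases hij.lt_or_gt with hij | hji
    · exact disjoint_left.2 fun x hx hx' => by linarith [hx.2, hx'.1, hlt i j hij]
    · exact disjoint_left.2 fun x hx hx' => by linarith [hx.1, hx'.2, hlt j i hji]
  · have hij' := hlt i j (Fin.lt_def.2 (by omega))
    have hjk' := hlt j k (Fin.lt_def.2 (by omega))
    exact .inl ⟨fun x hx => show g.proj x < (e j : ℝ) - 1 / 2 by linarith [hx.2],
      fun x hx => show (e j : ℝ) + 1 / 2 < g.proj x by linarith [hx.1]⟩

lemma card_le_of_meets_poles (g : Geodesic X) {L : ℕ∞} {h h' : Curtain X}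
    (hL : LSeparated L h h') (S : Finset ℝ)
    (hS : ∀ m ∈ S, Icc (m - 1 / 2) (m + 1 / 2) ⊆ interior g.I)
    (hgap : ∀ m ∈ S, ∀ m' ∈ S, m < m' → m + 1 < m')
    (hmeet : ∀ m ∈ S, (∃ z ∈ h.carrier, g.proj z ∈ Icc (m - 1 / 2) (m + 1 / 2)) ∧
      ∃ z ∈ h'.carrier, g.proj z ∈ Icc (m - 1 / 2) (m + 1 / 2)) :
    (S.card : ℕ∞) ≤ L := by
  obtain ⟨c, hc, hcS⟩ := exists_isChainSeq_of_poles g S hS hgap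
  refine hL.2 _ c hc fun i => ?_
  obtain ⟨m, hm, hcm⟩ := hcS i
  obtain ⟨⟨z, hz, hzm⟩, z', hz', hz'm⟩ := hmeet m hm
  rw [Meets, Meets, hcm]
  exact ⟨⟨z, hzm, hz⟩, z', hz'm, hz'⟩

end DualChains

def Encloses (γ : ℝ → X) (a b : ℝ) (h k : Curtain X) : Prop :=
  ∀ s ∈ Icc a b, γ s ∈ k.carrier →
    (∃ u ∈ Ioo a s, γ u ∈ h.carrier) ∧ ∃ v ∈ Ioo s b, γ v ∈ h.carrier

section CAT0Projection

variable [CAT0 X]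

namespace Geodesic

variable (g : Geodesic X)

lemma sq_dist_map_add_div_two_le (x : X) {u v : ℝ} (hu : u ∈ g.I) (hv : v ∈ g.I) :
    dist x (g.map ((u + v) / 2)) ^ 2 ≤
      (dist x (g.map u) ^ 2 + dist x (g.map v) ^ 2) / 2 - (u - v) ^ 2 / 4 := by
  have hm := g.add_div_two_mem hu hv
  have huv : dist (g.map u) (g.map v) = |u - v| := g.isom u hu v hv
  have hum : dist (g.map u) (g.map ((u + v) / 2)) = dist (g.map u) (g.map v) / 2 := by
    rw [g.isom u hu _ hm, huv, ← abs_two, ← abs_div, abs_two]; congr 1; ring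
  have hvm : dist (g.map v) (g.map ((u + v) / 2)) = dist (g.map u) (g.map v) / 2 := by
    rw [g.isom v hv _ hm, huv, ← abs_two, ← abs_div, abs_two, ← abs_neg]; congr 1; ring
  simpa only [huv, sq_abs] using CAT0.cn _ _ x _ hum hvm

/-- The CN inequality at midpoints, iterated towards the foot `g.proj x`, yields this Pythagorean
inequality up to an error `(1/2)^k (t - g.proj x)^2` for every `k`. -/
lemma sq_dist_proj_add_sq_le (x : X) {t : ℝ} (ht : t ∈ g.I) :
    dist x (g.map (g.proj x)) ^ 2 + (t - g.proj x) ^ 2 ≤ dist x (g.map t) ^ 2 := by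
  set p := g.proj x
  have hp : p ∈ g.I := g.proj_mem x
  have approx : ∀ k : ℕ, ∀ t ∈ g.I,
      dist x (g.map p) ^ 2 + (1 - (1 / 2 : ℝ) ^ k) * (t - p) ^ 2 ≤ dist x (g.map t) ^ 2 := by
    intro k
    induction k with
    | zero =>
      intro t ht
      simpa using pow_le_pow_left₀ dist_nonneg (g.proj_min x t ht) 2
    | succ k ih =>
      intro t ht
      have hmid := ih _ (g.add_div_two_mem ht hp)
      have hcn := g.sq_dist_map_add_div_two_le x ht hp
      have hsq : ((t + p) / 2 - p) ^ 2 = (t - p) ^ 2 / 4 := by ring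
      rw [hsq] at hmid
      rw [pow_succ (1 / 2 : ℝ) k]
      linarith
  have hlim : Filter.Tendsto
      (fun k : ℕ => dist x (g.map p) ^ 2 + (1 - (1 / 2 : ℝ) ^ k) * (t - p) ^ 2)
      Filter.atTop (nhds (dist x (g.map p) ^ 2 + (1 - 0) * (t - p) ^ 2)) :=
    ((tendsto_const_nhds.sub (tendsto_pow_atTop_nhds_zero_of_lt_one (by norm_num)
      (by norm_num))).mul tendsto_const_nhds).const_add _
  simpa using le_of_tendsto' hlim fun k => approx k t ht

lemma eq_proj_of_dist_le {x : X} {t : ℝ} (ht : t ∈ g.I)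
    (hle : dist x (g.map t) ≤ dist x (g.map (g.proj x))) : t = g.proj x := by
  have hpyth := g.sq_dist_proj_add_sq_le x ht
  have hsq := pow_le_pow_left₀ dist_nonneg hle 2
  have : (t - g.proj x) ^ 2 = 0 := le_antisymm (by linarith) (sq_nonneg _)
  simpa [sub_eq_zero] using this

lemma proj_map {t : ℝ} (ht : t ∈ g.I) : g.proj (g.map t) = t :=
  (g.eq_proj_of_dist_le ht (by simp)).symm

/-- Let `m` be the midpoint of `y` and the foot of `x`. The triangle inequality through `m`, the
CN inequality for `x` and for the foot of `y`, and the Pythagorean inequality at both feet combine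
to `(g.proj x - g.proj y) ^ 2 ≤ dist x y ^ 2`. -/
lemma lipschitzWith_proj : LipschitzWith 1 g.proj := by
  refine LipschitzWith.mk_one fun x y => ?_
  set p := g.proj x
  set q := g.proj y
  have hp : p ∈ g.I := g.proj_mem x
  have hq : q ∈ g.I := g.proj_mem y
  obtain ⟨m, hm₁, hm₂⟩ := CAT0.midpoint y (g.map p)
  have cn_x := CAT0.cn y (g.map p) x m hm₁ hm₂
  have cn_q := CAT0.cn y (g.map p) (g.map q) m hm₁ hm₂
  have pyth_x := g.sq_dist_proj_add_sq_le x hq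
  have pyth_y := g.sq_dist_proj_add_sq_le y hp
  have hpq : dist (g.map q) (g.map p) ^ 2 = (q - p) ^ 2 := by rw [g.isom q hq p hp, sq_abs]
  have htri : dist x (g.map q) ^ 2 ≤ 2 * dist x m ^ 2 + 2 * dist (g.map q) m ^ 2 := by
    have := dist_triangle_right x (g.map q) m
    nlinarith [sq_nonneg (dist x m - dist (g.map q) m), dist_nonneg (x := x) (y := g.map q)]
  have key : (p - q) ^ 2 ≤ dist x y ^ 2 := by
    rw [dist_comm (g.map q) y] at cn_q
    nlinarith
  rw [Real.dist_eq]
  exact (sq_le_sq.1 key).trans_eq (abs_of_nonneg dist_nonneg)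

lemma proj_eq_of_between {z u : X}
    (hu : dist z u + dist u (g.map (g.proj z)) = dist z (g.map (g.proj z))) :
    g.proj u = g.proj z := by
  refine (g.eq_proj_of_dist_le (g.proj_mem z) ?_).symm
  have := g.proj_min z (g.proj u) (g.proj_mem u)
  have := dist_triangle z u (g.map (g.proj u))
  linarith

lemma proj_mem_uIcc_of_between {p q : ℝ} (hp : p ∈ g.I) (hq : q ∈ g.I) {u : X}
    (hu : dist (g.map p) u + dist u (g.map q) = dist (g.map p) (g.map q)) :
    g.proj u ∈ uIcc p q := by
  have hup := g.lipschitzWith_proj.dist_le_mul u (g.map p)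
  have huq := g.lipschitzWith_proj.dist_le_mul u (g.map q)
  rw [g.proj_map hp, NNReal.coe_one, one_mul, Real.dist_eq, abs_le, dist_comm] at hup
  rw [g.proj_map hq, NNReal.coe_one, one_mul, Real.dist_eq, abs_le] at huq
  rw [g.isom p hp q hq] at hu
  rcases le_total p q with hpq | hqp
  · rw [abs_of_nonpos (by linarith)] at hu
    exact mem_uIcc_of_le (by linarith) (by linarith)
  · rw [abs_of_nonneg (by linarith)] at hu
    exact mem_uIcc_of_ge (by linarith) (by linarith)

end Geodesic

lemma CAT0.joinedByEpsChain_between (x y : X) {ε : ℝ} (hε : 0 < ε) :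
    JoinedByEpsChain {u | dist x u + dist u y = dist x y} ε x y := by
  have dyadic : ∀ (k : ℕ) (x y : X),
      JoinedByEpsChain {u | dist x u + dist u y = dist x y} (dist x y / 2 ^ k) x y := by
    intro k
    induction k with
    | zero => exact fun x y => .single ⟨by simp, by simp, by simp⟩
    | succ k ih =>
      intro x y
      obtain ⟨m, hxm, hym⟩ := CAT0.midpoint x y
      have hmy : dist m y = dist x y / 2 := by rw [dist_comm, hym]
      have hstep : dist x m / 2 ^ k = dist x y / 2 ^ (k + 1) := by rw [hxm, pow_succ]; ring
      refine ((ih x m).mono ?_ hstep.le).trans ((ih m y).mono ?_ (by rw [hmy, ← hxm, hstep]))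
      · intro u (hu : dist x u + dist u m = dist x m)
        have := dist_triangle u m y
        exact le_antisymm (by linarith) (dist_triangle x u y)
      · intro u (hu : dist m u + dist u y = dist m y)
        have := dist_triangle x m u
        exact le_antisymm (by linarith) (dist_triangle x u y)
  obtain ⟨k, hk⟩ := pow_unbounded_of_one_lt (dist x y / ε) one_lt_two
  refine (dyadic k x y).mono subset_rfl ?_
  rw [div_lt_iff₀ hε] at hk
  rw [div_le_iff₀ (by positivity)]
  linarith

end CAT0Projection

section CAT0Curtains

variable [CAT0 X]

namespace Curtain

variable (h : Curtain X)

lemma lipschitzWith_height : LipschitzWith 1 h.height :=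
  LipschitzWith.mk_one fun x y => by
    simpa [height] using h.geo.lipschitzWith_proj.dist_le_mul x y

lemma joinedByEpsChain_carrier {x y : X} (hx : x ∈ h.carrier) (hy : y ∈ h.carrier) {ε : ℝ}
    (hε : 0 < ε) : JoinedByEpsChain h.carrier ε x y := by
  set g := h.geo
  have toFoot : ∀ z ∈ h.carrier, JoinedByEpsChain h.carrier ε z (g.map (g.proj z)) :=
    fun z hz => (CAT0.joinedByEpsChain_between z _ hε).mono
      (fun u hu => by rw [carrier, mem_ofPred_eq, g.proj_eq_of_between hu]; exact hz) le_rfl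
  have feet : JoinedByEpsChain h.carrier ε (g.map (g.proj x)) (g.map (g.proj y)) :=
    (CAT0.joinedByEpsChain_between _ _ hε).mono (fun u hu =>
      uIcc_subset_Icc hx hy (g.proj_mem_uIcc_of_between (g.proj_mem x) (g.proj_mem y) hu)) le_rfl
  exact ((toFoot x hx).trans feet).trans (toFoot y hy).symm

lemma exists_mem_carrier_mem_Icc {x y : X} (hx : x ∈ h.carrier) (hy : y ∈ h.carrier)
    {F : X → ℝ} (hF : LipschitzWith 1 F) {A B : ℝ} (hAB : A < B) (hxA : F x < A)
    (hyB : B < F y) : ∃ u ∈ h.carrier, F u ∈ Icc A B :=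
  (h.joinedByEpsChain_carrier hx hy (sub_pos.2 hAB)).exists_mem_Icc hAB.le hF hxA hyB

lemma sameSide_of_disjoint {k : Curtain X} (hhk : Disjoint h.carrier k.carrier) {x y : X}
    (hx : x ∈ k.carrier) (hy : y ∈ k.carrier) : h.SameSide x y := by
  have crossing : ∀ {u v : X}, u ∈ k.carrier → v ∈ k.carrier → u ∈ h.minus → v ∈ h.plus →
      False := by
    intro u v hu hv hum hvp
    obtain ⟨w, hwk, hw⟩ := k.exists_mem_carrier_mem_Icc hu hv h.lipschitzWith_height
      (by norm_num : -(1 / 2 : ℝ) < 1 / 2) (h.mem_minus_iff.1 hum) (h.mem_plus_iff.1 hvp)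
    exact disjoint_right.1 hhk hwk (h.mem_carrier_iff.2 (abs_le.2 hw))
  refine (h.sameSide_or_separatesPts (disjoint_right.1 hhk hx)
    (disjoint_right.1 hhk hy)).resolve_right fun hsep => ?_
  rcases h.separatesPts_iff.1 hsep with ⟨hxm, hyp⟩ | ⟨hxp, hym⟩
  · exact crossing hx hy hxm hyp
  · exact crossing hy hx hym hxp

variable {γ : ℝ → X} {a b : ℝ}

lemma exists_unit_Icc_mapsTo_carrier (hab : a ≤ b) (hγ : IsGeodesicOn γ (Icc a b))
    (hsep : h.SeparatesPts (γ a) (γ b)) :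
    ∃ m, a < m - 1 / 2 ∧ m + 1 / 2 < b ∧ MapsTo γ (Icc (m - 1 / 2) (m + 1 / 2)) h.carrier := by
  have hf : LipschitzOnWith 1 (h.height ∘ γ) (Icc a b) := by
    simpa using h.lipschitzWith_height.comp_lipschitzOnWith hγ.lipschitzOnWith
  have hsign : 1 / 2 < h.height (γ a) ∧ h.height (γ b) < -(1 / 2) ∨
      h.height (γ a) < -(1 / 2) ∧ 1 / 2 < h.height (γ b) := by
    rw [separatesPts_iff, mem_minus_iff, mem_minus_iff, mem_plus_iff, mem_plus_iff] at hsep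
    exact hsep.symm
  obtain ⟨m, ham, hmb, hm⟩ := exists_unit_Icc_abs_le_half hab hf hsign
  exact ⟨m, ham, hmb, fun s hs => h.mem_carrier_iff.2 (hm s hs)⟩

lemma exists_last_mem_carrier (hab : a ≤ b) (hγ : IsGeodesicOn γ (Icc a b))
    (hsep : h.SeparatesPts (γ a) (γ b)) :
    ∃ x ∈ Ico a b, γ x ∈ h.carrier ∧ ∀ s ∈ Ioc x b, h.SameSide (γ b) (γ s) := by
  set T := Icc a b ∩ γ ⁻¹' h.carrier
  have hTbdd : BddAbove T := ⟨b, fun s hs => hs.1.2⟩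
  have hcarrier : IsClosed h.carrier := isClosed_Icc.preimage h.geo.lipschitzWith_proj.continuous
  obtain ⟨m, ham, hmb, hm⟩ := h.exists_unit_Icc_mapsTo_carrier hab hγ hsep
  have hxT : sSup T ∈ T :=
    (hγ.lipschitzOnWith.continuousOn.preimage_isClosed_of_isClosed isClosed_Icc hcarrier).csSup_mem
      ⟨m - 1 / 2, ⟨by linarith, by linarith⟩, hm ⟨le_rfl, by linarith⟩⟩ hTbdd
  refine ⟨sSup T, ⟨hxT.1.1, lt_of_le_of_ne hxT.1.2 fun hxb => ?_⟩, hxT.2, fun s hs => ?_⟩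
  · exact hsep.notMem_carrier.2 (hxb ▸ hxT.2)
  have has : a ≤ s := hxT.1.1.trans hs.1.le
  have hs_out : γ s ∉ h.carrier := fun hsc => (le_csSup hTbdd ⟨⟨has, hs.2⟩, hsc⟩).not_gt hs.1
  refine (h.sameSide_or_separatesPts hsep.notMem_carrier.2 hs_out).resolve_right fun hbs => ?_
  obtain ⟨m', hsm', hm'b, hm'⟩ :=
    h.exists_unit_Icc_mapsTo_carrier hs.2 (hγ.mono (Icc_subset_Icc_left has)) hbs.symm
  have := le_csSup hTbdd ⟨⟨by linarith, by linarith⟩, hm' ⟨le_rfl, by linarith⟩⟩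
  linarith [hs.1]

end Curtain

end CAT0Curtains

section CAT0Nesting

variable [CAT0 X]

lemma encloses_of_sameSide {γ : ℝ → X} {a b : ℝ} (hγ : IsGeodesicOn γ (Icc a b))
    {h k : Curtain X} (hhk : Disjoint h.carrier k.carrier) {y z : X}
    (hay : h.SeparatesPts (γ a) y) (hyb : h.SeparatesPts y (γ b)) (hz : z ∈ k.carrier)
    (hyz : h.SameSide y z) : Encloses γ a b h k := by
  intro s hs hsk
  have hzs := h.sameSide_of_disjoint hhk hz hsk
  have has : h.SeparatesPts (γ a) (γ s) := (hay.trans_sameSide hyz).trans_sameSide hzs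
  have hsb : h.SeparatesPts (γ s) (γ b) :=
    ((hyb.symm.trans_sameSide hyz).trans_sameSide hzs).symm
  obtain ⟨m, ham, hms, hm⟩ :=
    h.exists_unit_Icc_mapsTo_carrier hs.1 (hγ.mono (Icc_subset_Icc_right hs.2)) has
  obtain ⟨m', hsm', hm'b, hm'⟩ :=
    h.exists_unit_Icc_mapsTo_carrier hs.2 (hγ.mono (Icc_subset_Icc_left hs.1)) hsb
  exact ⟨⟨m - 1 / 2, ⟨ham, by linarith⟩, hm ⟨le_rfl, by linarith⟩⟩,
    m' - 1 / 2, ⟨hsm', by linarith⟩, hm' ⟨le_rfl, by linarith⟩⟩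

lemma Encloses.exists_proj_mem_Icc {g : Geodesic X} {a b : ℝ} (hgI : g.I = Icc a b)
    {h k : Curtain X} (hhk : Encloses g.map a b h k) {m : ℝ}
    (hm : Icc (m - 1 / 2) (m + 1 / 2) ⊆ Ioo a b)
    (hmk : MapsTo g.map (Icc (m - 1 / 2) (m + 1 / 2)) k.carrier) :
    ∃ z ∈ h.carrier, g.proj z ∈ Icc (m - 1 / 2) (m + 1 / 2) := by
  have hl : m - 1 / 2 ∈ Icc (m - 1 / 2) (m + 1 / 2) := ⟨le_rfl, by linarith⟩
  have hr : m + 1 / 2 ∈ Icc (m - 1 / 2) (m + 1 / 2) := ⟨by linarith, le_rfl⟩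
  obtain ⟨⟨u, hu, hum⟩, -⟩ := hhk _ (Ioo_subset_Icc_self (hm hl)) (hmk hl)
  obtain ⟨-, v, hv, hvm⟩ := hhk _ (Ioo_subset_Icc_self (hm hr)) (hmk hr)
  have huI : u ∈ g.I := hgI ▸ ⟨hu.1.le, by linarith [hu.2, (hm hl).2]⟩
  have hvI : v ∈ g.I := hgI ▸ ⟨by linarith [hv.1, (hm hr).1], hv.2.le⟩
  exact h.exists_mem_carrier_mem_Icc hum hvm g.lipschitzWith_proj (by linarith)
    (by rw [g.proj_map huI]; exact hu.2) (by rw [g.proj_map hvI]; exact hv.1)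

variable {γ : ℝ → X} {t₁ t₂ t₃ : ℝ} {n : ℕ}

/-- Order the curtains by their last visit before `t₂`: the curtain visited earliest encloses all
others, and the second earliest encloses all but the first. -/
lemma exists_encloses_pair (hγ : IsGeodesicOn γ (Icc t₁ t₃)) (o12 : t₁ < t₂) (o23 : t₂ < t₃)
    (c : Fin n → Curtain X) (hdisj : ∀ i j, i ≠ j → Disjoint (c i).carrier (c j).carrier)
    (hsep₁ : ∀ i, (c i).SeparatesPts (γ t₁) (γ t₂))
    (hsep₃ : ∀ i, (c i).SeparatesPts (γ t₂) (γ t₃)) (hn : 2 ≤ n) :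
    ∃ a b, a ≠ b ∧ (∀ i, i ≠ a → Encloses γ t₁ t₃ (c a) (c i)) ∧
      ∀ i, i ≠ a → i ≠ b → Encloses γ t₁ t₃ (c b) (c i) := by
  choose x hx hxc hxside using fun i => (c i).exists_last_mem_carrier o12.le
    (hγ.mono (Icc_subset_Icc_right o23.le)) (hsep₁ i)
  have hnest : ∀ i j, x i < x j → Encloses γ t₁ t₃ (c i) (c j) := fun i j hij =>
    encloses_of_sameSide hγ (hdisj i j fun hij' => hij.ne (hij' ▸ rfl)) (hsep₁ i) (hsep₃ i)
      (hxc j) (hxside i (x j) ⟨hij, (hx j).2.le⟩)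
  have hinj : Function.Injective x := fun i j hij => by_contra fun hne =>
    disjoint_left.1 (hdisj i j hne) (hxc i) (hij ▸ hxc j)
  obtain ⟨a, b, hab, ha, hb⟩ := exists_two_least_of_injective hinj (by simpa using hn)
  exact ⟨a, b, hab, fun i hi => hnest a i (ha i hi), fun i hia hib => hnest b i (hb i hia hib)⟩

/-- `P (i, false)` and `P (i, true)` are the centres of unit intervals on which `γ` crosses `c i`
before and after `t₂`. -/
lemma exists_disjoint_poles (hγ : IsGeodesicOn γ (Icc t₁ t₃)) (o12 : t₁ < t₂) (o23 : t₂ < t₃)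
    (c : Fin n → Curtain X) (hdisj : ∀ i j, i ≠ j → Disjoint (c i).carrier (c j).carrier)
    (hsep₁ : ∀ i, (c i).SeparatesPts (γ t₁) (γ t₂))
    (hsep₃ : ∀ i, (c i).SeparatesPts (γ t₂) (γ t₃)) :
    ∃ P : Fin n × Bool → ℝ, (∀ p, Icc (P p - 1 / 2) (P p + 1 / 2) ⊆ Ioo t₁ t₃) ∧
      (∀ p, MapsTo γ (Icc (P p - 1 / 2) (P p + 1 / 2)) (c p.1).carrier) ∧
      Pairwise fun p q =>
        Disjoint (Icc (P p - 1 / 2) (P p + 1 / 2)) (Icc (P q - 1 / 2) (P q + 1 / 2)) := by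
  choose mL hL₁ hL₂ hL using fun i => (c i).exists_unit_Icc_mapsTo_carrier o12.le
    (hγ.mono (Icc_subset_Icc_right o23.le)) (hsep₁ i)
  choose mR hR₁ hR₂ hR using fun i => (c i).exists_unit_Icc_mapsTo_carrier o23.le
    (hγ.mono (Icc_subset_Icc_left o12.le)) (hsep₃ i)
  set P : Fin n × Bool → ℝ := fun p => cond p.2 (mR p.1) (mL p.1)
  have hPc : ∀ p, MapsTo γ (Icc (P p - 1 / 2) (P p + 1 / 2)) (c p.1).carrier := by
    rintro ⟨i, _ | _⟩
    exacts [hL i, hR i]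
  refine ⟨P, ?_, hPc, ?_⟩
  · rintro ⟨i, _ | _⟩ s ⟨hs₁, hs₂⟩ <;> simp only [P, cond_false, cond_true] at hs₁ hs₂
    · exact ⟨by linarith [hL₁ i], by linarith [hL₂ i]⟩
    · exact ⟨by linarith [hR₁ i], by linarith [hR₂ i]⟩
  · rintro ⟨i, e⟩ ⟨j, e'⟩ hne
    by_cases hij : i = j
    · subst hij
      have hLR : Disjoint (Icc (mL i - 1 / 2) (mL i + 1 / 2)) (Icc (mR i - 1 / 2) (mR i + 1 / 2)) :=
        disjoint_left.2 fun s hs hs' => by linarith [hs.2, hs'.1, hL₂ i, hR₁ i]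
      cases e <;> cases e'
      exacts [absurd rfl hne, hLR, hLR.symm, absurd rfl hne]
    · exact ((hdisj i j hij).preimage γ).mono (hPc (i, e)).subset_preimage
        (hPc (j, e')).subset_preimage

/-- The unit intervals around the crossings of all `c i` with `i ≠ a` are the poles of a chain of
`2 (n - 1)` curtains dual to `γ`, each of which meets both `c a` and `c b`. -/
lemma two_mul_le_of_encloses (g : Geodesic X) (hgI : g.I = Icc t₁ t₃) (c : Fin n → Curtain X)
    (P : Fin n × Bool → ℝ) (hPI : ∀ p, Icc (P p - 1 / 2) (P p + 1 / 2) ⊆ Ioo t₁ t₃)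
    (hPc : ∀ p, MapsTo g.map (Icc (P p - 1 / 2) (P p + 1 / 2)) (c p.1).carrier)
    (hPdisj : Pairwise fun p q =>
      Disjoint (Icc (P p - 1 / 2) (P p + 1 / 2)) (Icc (P q - 1 / 2) (P q + 1 / 2)))
    {a b : Fin n} (ha : ∀ i, i ≠ a → Encloses g.map t₁ t₃ (c a) (c i))
    (hb : ∀ i, i ≠ a → i ≠ b → Encloses g.map t₁ t₃ (c b) (c i)) {L : ℕ∞}
    (hL : LSeparated L (c a) (c b)) : ((2 * (n - 1) : ℕ) : ℕ∞) ≤ L := by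
  classical
  have hgap : ∀ p q, p ≠ q → P p ≤ P q → P p + 1 < P q := fun p q hpq =>
    add_one_lt_of_disjoint_Icc (hPdisj hpq)
  have hinj : Function.Injective P := fun p q hpq => by_contra fun hne => by
    linarith [hgap p q hne hpq.le]
  set S := ((Finset.univ.erase a) ×ˢ Finset.univ).image P
  have hcard : S.card = 2 * (n - 1) := by
    rw [Finset.card_image_of_injective _ hinj, Finset.card_product,
      Finset.card_erase_of_mem (Finset.mem_univ a)]
    simp [mul_comm]
  rw [← hcard]
  refine card_le_of_meets_poles g hL S ?_ ?_ ?_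
  · rintro _ hm
    obtain ⟨p, -, rfl⟩ := Finset.mem_image.1 hm
    rw [hgI, interior_Icc]
    exact hPI p
  · rintro _ hm _ hm' hlt
    obtain ⟨p, -, rfl⟩ := Finset.mem_image.1 hm
    obtain ⟨q, -, rfl⟩ := Finset.mem_image.1 hm'
    exact hgap p q (fun hpq => hlt.ne (hpq ▸ rfl)) hlt.le
  · rintro _ hm
    obtain ⟨⟨i, e⟩, hie, rfl⟩ := Finset.mem_image.1 hm
    have hia : i ≠ a := Finset.ne_of_mem_erase (Finset.mem_product.1 hie).1
    refine ⟨(ha i hia).exists_proj_mem_Icc hgI (hPI _) (hPc _), ?_⟩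
    by_cases hib : i = b
    · subst hib
      have hmem : P (i, e) ∈ Icc (P (i, e) - 1 / 2) (P (i, e) + 1 / 2) :=
        ⟨by linarith, by linarith⟩
      refine ⟨g.map (P (i, e)), hPc _ hmem, ?_⟩
      rwa [g.proj_map (hgI ▸ Ioo_subset_Icc_self (hPI _ hmem))]
    · exact (hb i hia hib).exists_proj_mem_Icc hgI (hPI _) (hPc _)

end CAT0Nesting

theorem stmt12_general {X : Type*} [MetricSpace X] [CAT0 X] (L : ℕ)
    (γ : ℝ → X) (I : Set ℝ) (hI : I.OrdConnected) (hgeo : IsGeodesicOn γ I)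
    (t₁ t₂ t₃ : ℝ) (h1 : t₁ ∈ I) (h3 : t₃ ∈ I)
    (o12 : t₁ < t₂) (o23 : t₂ < t₃)
    {n : ℕ} (c : Fin n → Curtain X) (hc : IsLChain (L : ℕ∞) c)
    (hsep : ∀ i, (c i).SeparatesSets {γ t₂} {γ t₁, γ t₃}) :
    n ≤ 1 + L / 2 := by
  obtain hn | hn := le_or_gt n 1
  · omega
  have hγ : IsGeodesicOn γ (Icc t₁ t₃) := hgeo.mono (hI.out h1 h3)
  have hsep₁ : ∀ i, (c i).SeparatesPts (γ t₁) (γ t₂) := fun i =>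
    ((hsep i).mono subset_rfl (by simp)).symm
  have hsep₃ : ∀ i, (c i).SeparatesPts (γ t₂) (γ t₃) := fun i =>
    (hsep i).mono subset_rfl (by simp)
  obtain ⟨P, hPI, hPc, hPdisj⟩ := exists_disjoint_poles hγ o12 o23 c hc.1.1 hsep₁ hsep₃
  obtain ⟨a, b, hab, ha, hb⟩ := exists_encloses_pair hγ o12 o23 c hc.1.1 hsep₁ hsep₃ hn
  obtain ⟨g, hgI, rfl⟩ := exists_geodesic_map_eq (o12.trans o23).le hγ
  have hcard := two_mul_le_of_encloses g hgI c P hPI hPc hPdisj ha hb (hc.2 a b hab)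
  have : 2 * (n - 1) ≤ L := by exact_mod_cast hcard
  omega

/-- an `L`-chain separating a point of a geodesic from two points
on either side of it has cardinality at most `1 + ⌊L/2⌋`. -/
theorem stmt12 {X : Type*} [MetricSpace X] [CAT0 X] (L : ℕ)
    (γ : ℝ → X) (I : Set ℝ) (hI : I.OrdConnected) (hgeo : IsGeodesicOn γ I)
    (t₁ t₂ t₃ : ℝ) (h1 : t₁ ∈ I) (h2 : t₂ ∈ I) (h3 : t₃ ∈ I)
    (o12 : t₁ < t₂) (o23 : t₂ < t₃)
    {n : ℕ} (c : Fin n → Curtain X) (hc : IsLChain (L : ℕ∞) c)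
    (hsep : ∀ i, (c i).SeparatesSets {γ t₂} {γ t₁, γ t₃}) :
    n ≤ 1 + L / 2 :=
  stmt12_general L γ I hI hgeo t₁ t₂ t₃ h1 h3 o12 o23 c hc hsep

end Curtains
end
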